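/- arXiv:1909.01209 — 2 statements merged into one kernel-verified Lean document; each statement's English description precedes it below -/
import Mathlib

section
/- Let Q : ℝ^E → ℝ^{E×E} be L-Lipschitz and bounded, with Q(m) having zero row sums and nonnegative off-diagonal entries whenever m is a probability vector, and let π : ℝ≥0 → Δ(A)^E be measurable. Then any solution m of the Kolmogorov ODE ṁ_j(t) = ∑_{i,a} m_i(t) Q_{ija}(m(t)) π_{i,a}(t) with probability-vector initial condition m(0) = m_0 remains a probability vector (nonnegative entries summing to 1) for all t ≥ 0. -/
open MeasureTheory intervalIntegral NNReal

lemma abs_sub_max_self (x : ℝ) : |x - max x 0| = max (-x) 0 := by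
  rcases le_total x 0 with h | h
  · rw [max_eq_right h, max_eq_left (neg_nonneg.2 h), sub_zero, abs_of_nonpos h]
  · rw [max_eq_left h, max_eq_right (neg_nonpos.2 h), sub_self, abs_zero]

lemma max_self_eq_add (x : ℝ) : max x 0 = x + max (-x) 0 := by
  rcases le_total x 0 with h | h
  · rw [max_eq_right h, max_eq_left (neg_nonneg.2 h)]; ring
  · rw [max_eq_left h, max_eq_right (neg_nonpos.2 h)]; ring

lemma proj_dist {E : Type*} [Fintype E] (v : E → ℝ)
    (hs : (0:ℝ) < ∑ i, max (v i) 0) :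
    ∑ i, |v i - max (v i) 0 / ∑ k, max (v k) 0| ≤
      2 * (|(∑ i, v i) - 1| + ∑ i, max (-v i) 0) := by
  set s := ∑ k, max (v k) 0 with hsdef
  have hsne : s ≠ 0 := ne_of_gt hs
  have h1 : ∀ i, |v i - max (v i) 0 / s| ≤ max (-v i) 0 + max (v i) 0 * |1 - 1/s| := by
    intro i
    have he : v i - max (v i) 0 / s = (v i - max (v i) 0) + max (v i) 0 * (1 - 1/s) := by
      field_simp; ring
    rw [he]
    refine (abs_add_le _ _).trans ?_
    rw [abs_sub_max_self, abs_mul, abs_of_nonneg (le_max_right (v i) 0)]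
  have h2 : ∑ i, |v i - max (v i) 0 / s| ≤ (∑ i, max (-v i) 0) + s * |1 - 1/s| := by
    calc ∑ i, |v i - max (v i) 0 / s| ≤ ∑ i, (max (-v i) 0 + max (v i) 0 * |1 - 1/s|) :=
          Finset.sum_le_sum fun i _ => h1 i
      _ = (∑ i, max (-v i) 0) + s * |1 - 1/s| := by
          rw [Finset.sum_add_distrib, ← Finset.sum_mul]
  have h3 : s * |1 - 1/s| = |s - 1| := by
    have he : 1 - 1/s = (s-1)/s := by field_simp
    rw [he, abs_div, abs_of_pos hs]
    field_simp
  have h4 : |s - 1| ≤ |(∑ i, v i) - 1| + ∑ i, max (-v i) 0 := by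
    have hse : s = (∑ i, v i) + ∑ i, max (-v i) 0 := by
      rw [hsdef, ← Finset.sum_add_distrib]
      exact Finset.sum_congr rfl fun i _ => max_self_eq_add (v i)
    have hN : 0 ≤ ∑ i, max (-v i) 0 :=
      Finset.sum_nonneg fun i _ => le_max_right _ _
    rw [hse]
    calc |(∑ i, v i) + (∑ i, max (-v i) 0) - 1|
        ≤ |(∑ i, v i) - 1| + |∑ i, max (-v i) 0| := by
          rw [add_sub_right_comm]; exact abs_add_le _ _
      _ = |(∑ i, v i) - 1| + ∑ i, max (-v i) 0 := by rw [abs_of_nonneg hN]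
  have hD : 0 ≤ |(∑ i, v i) - 1| := abs_nonneg _
  calc ∑ i, |v i - max (v i) 0 / s| ≤ (∑ i, max (-v i) 0) + s * |1 - 1/s| := h2
    _ = (∑ i, max (-v i) 0) + |s - 1| := by rw [h3]
    _ ≤ 2 * (|(∑ i, v i) - 1| + ∑ i, max (-v i) 0) := by
        have hN : 0 ≤ ∑ i, max (-v i) 0 :=
          Finset.sum_nonneg fun i _ => le_max_right _ _
        linarith

/-- The Kolmogorov ODE (in Carathéodory/integral form) preserves the probability
simplex: any continuous solution with probability-vector initial condition remains
a probability vector for all `t ≥ 0`. -/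
theorem kolmogorov_ode_preserves_simplex
    {E A : Type*} [Fintype E] [Fintype A]
    (L C : ℝ≥0) (Q : (E → ℝ) → E → E → A → ℝ)
    (hQL : ∀ i j a, LipschitzWith L (fun m => Q m i j a))
    (hQbdd : ∀ m i j a, |Q m i j a| ≤ C)
    (hQrow : ∀ m : E → ℝ, (∀ i, 0 ≤ m i) → (∑ i, m i) = 1 →
      ∀ i a, (∑ j, Q m i j a) = 0)
    (hQoff : ∀ m : E → ℝ, (∀ i, 0 ≤ m i) → (∑ i, m i) = 1 →
      ∀ i j a, i ≠ j → 0 ≤ Q m i j a)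
    (π : ℝ → E → A → ℝ) (hπmeas : ∀ i a, Measurable (fun t => π t i a))
    (hπpos : ∀ t i a, 0 ≤ π t i a) (hπsum : ∀ t i, (∑ a, π t i a) = 1)
    (m : ℝ → E → ℝ) (hmcont : ∀ j, Continuous (fun t => m t j))
    (hm0pos : ∀ j, 0 ≤ m 0 j) (hm0sum : (∑ j, m 0 j) = 1)
    (hsol : ∀ t ≥ (0:ℝ), ∀ j,
      m t j = m 0 j + ∫ u in (0:ℝ)..t, ∑ i, ∑ a, m u i * Q (m u) i j a * π u i a) :
    ∀ t ≥ (0:ℝ), (∀ j, 0 ≤ m t j) ∧ (∑ j, m t j) = 1 := by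
  classical
  have hC0 : (0:ℝ) ≤ C := C.coe_nonneg
  have hL0 : (0:ℝ) ≤ L := L.coe_nonneg
  have hmc : Continuous (fun t => m t) := continuous_pi hmcont
  set F : E → ℝ → ℝ := fun j u => ∑ i, ∑ a, m u i * Q (m u) i j a * π u i a with hFdef
  have hsolF : ∀ t ≥ (0:ℝ), ∀ j, m t j = m 0 j + ∫ u in (0:ℝ)..t, F j u := by
    intro t ht j; simp only [hFdef]; exact hsol t ht j
  have hπle : ∀ t i a, π t i a ≤ 1 := by
    intro t i a
    have h := Finset.single_le_sum (f := fun b => π t i b) (fun b _ => hπpos t i b)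
      (Finset.mem_univ a)
    rw [hπsum t i] at h; exact h
  have hQc : ∀ i j a, Continuous fun t => Q (m t) i j a :=
    fun i j a => ((hQL i j a).continuous).comp hmc
  have hFmeas : ∀ j, Measurable (F j) := by
    intro j
    refine Finset.measurable_sum _ fun i _ => Finset.measurable_sum _ fun a _ => ?_
    exact ((hmcont i).measurable.mul (hQc i j a).measurable).mul (hπmeas i a)
  -- the good set
  have hgood_closed : IsClosed {u : ℝ | (∀ j, 0 ≤ m u j) ∧ (∑ j, m u j) = 1} := by
    have h1 : IsClosed {u : ℝ | ∀ j, 0 ≤ m u j} := by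
      rw [Set.setOf_forall]
      exact isClosed_iInter fun j => isClosed_le continuous_const (hmcont j)
    have h2 : IsClosed {u : ℝ | (∑ j, m u j) = 1} :=
      isClosed_eq (continuous_finset_sum _ fun j _ => hmcont j) continuous_const
    exact h1.inter h2
  -- local invariance
  have hlocal : ∀ t₀ : ℝ, 0 ≤ t₀ → (∀ j, 0 ≤ m t₀ j) → (∑ j, m t₀ j) = 1 →
      ∃ ε > 0, ∀ u ∈ Set.Icc t₀ (t₀ + ε), (∀ j, 0 ≤ m u j) ∧ (∑ j, m u j) = 1 := by
    intro t₀ ht₀ hpos0 hsum0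
    -- the deficiency functional
    set φ : ℝ → ℝ := fun u => |(∑ j, m u j) - 1| + ∑ j, max (-(m u j)) 0 with hφdef
    have hφc : Continuous φ := by
      refine Continuous.add ?_ ?_
      · exact ((continuous_finset_sum _ fun j _ => hmcont j).sub continuous_const).abs
      · exact continuous_finset_sum _ fun j _ => ((hmcont j).neg).max continuous_const
    have hφnn : ∀ u, 0 ≤ φ u := fun u =>
      add_nonneg (abs_nonneg _) (Finset.sum_nonneg fun j _ => le_max_right _ _)
    have hφ0 : φ t₀ = 0 := by
      simp only [hφdef]
      rw [hsum0, sub_self, abs_zero, zero_add]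
      exact Finset.sum_eq_zero fun j _ => max_eq_right (neg_nonpos.2 (hpos0 j))
    have hDle : ∀ u, |(∑ j, m u j) - 1| ≤ φ u := fun u =>
      le_add_of_nonneg_right (Finset.sum_nonneg fun j _ => le_max_right _ _)
    have hNle : ∀ u j, max (-(m u j)) 0 ≤ φ u := by
      intro u j
      have h1 : max (-(m u j)) 0 ≤ ∑ k, max (-(m u k)) 0 :=
        Finset.single_le_sum (f := fun k => max (-(m u k)) 0)
          (fun k _ => le_max_right _ _) (Finset.mem_univ j)
      exact h1.trans (le_add_of_nonneg_left (abs_nonneg _))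
    -- bound on m over [0, t₀+1]
    obtain ⟨M, hM⟩ := (isCompact_Icc (a := (0:ℝ)) (b := t₀+1)).exists_bound_of_continuousOn
      hmc.continuousOn
    have hM0 : 0 ≤ M := (norm_nonneg (m 0)).trans (hM 0 ⟨le_refl 0, by linarith⟩)
    have hmM : ∀ u ∈ Set.Icc (0:ℝ) (t₀+1), ∀ i, |m u i| ≤ M := by
      intro u hu i
      have h := norm_le_pi_norm (m u) i
      rw [Real.norm_eq_abs] at h
      exact h.trans (hM u hu)
    -- integrand bound and integrability
    have hFbd : ∀ j, ∀ u ∈ Set.Icc (0:ℝ) (t₀+1),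
        ‖F j u‖ ≤ (Fintype.card E : ℝ) * ((Fintype.card A : ℝ) * (M * C)) := by
      intro j u hu
      rw [Real.norm_eq_abs]
      simp only [hFdef]
      have hterm : ∀ i a, |m u i * Q (m u) i j a * π u i a| ≤ M * C := by
        intro i a
        rw [abs_mul, abs_mul]
        have h1 : |m u i| * |Q (m u) i j a| ≤ M * C :=
          mul_le_mul (hmM u hu i) (hQbdd (m u) i j a) (abs_nonneg _) hM0
        have h2 : |π u i a| ≤ 1 := by
          rw [abs_of_nonneg (hπpos u i a)]; exact hπle u i a
        calc |m u i| * |Q (m u) i j a| * |π u i a| ≤ (M * C) * 1 := by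
              exact mul_le_mul h1 h2 (abs_nonneg _) (mul_nonneg hM0 hC0)
          _ = M * C := mul_one _
      calc |∑ i, ∑ a, m u i * Q (m u) i j a * π u i a|
          ≤ ∑ i, |∑ a, m u i * Q (m u) i j a * π u i a| := Finset.abs_sum_le_sum_abs _ _
        _ ≤ ∑ i, ∑ a, |m u i * Q (m u) i j a * π u i a| :=
            Finset.sum_le_sum fun i _ => Finset.abs_sum_le_sum_abs _ _
        _ ≤ ∑ _i : E, ∑ _a : A, (M * C) :=
            Finset.sum_le_sum fun i _ => Finset.sum_le_sum fun a _ => hterm i a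
        _ = (Fintype.card E : ℝ) * ((Fintype.card A : ℝ) * (M * C)) := by
            simp [Finset.sum_const, Finset.card_univ, nsmul_eq_mul]
    have hFint : ∀ j, ∀ a b : ℝ, a ∈ Set.Icc (0:ℝ) (t₀+1) → b ∈ Set.Icc (0:ℝ) (t₀+1) →
        IntervalIntegrable (F j) volume a b := by
      intro j a b ha hb
      rw [intervalIntegrable_iff]
      refine Measure.integrableOn_of_bounded (M := (Fintype.card E : ℝ) * ((Fintype.card A : ℝ) * (M * C))) measure_Ioc_lt_top.ne
        ((hFmeas j).aestronglyMeasurable) ?_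
      filter_upwards [ae_restrict_mem measurableSet_uIoc] with u hu
      have humem : u ∈ Set.Icc (0:ℝ) (t₀+1) := by
        constructor
        · exact le_trans (le_min ha.1 hb.1) hu.1.le
        · exact le_trans hu.2 (max_le ha.2 hb.2)
      exact hFbd j u humem
    -- integral identity
    have hid : ∀ a b : ℝ, 0 ≤ a → a ∈ Set.Icc (0:ℝ) (t₀+1) → b ∈ Set.Icc (0:ℝ) (t₀+1) →
        ∀ j, m b j = m a j + ∫ u in a..b, F j u := by
      intro a b ha hha hhb j
      have h0b : (0:ℝ) ∈ Set.Icc (0:ℝ) (t₀+1) := ⟨le_refl _, by linarith⟩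
      have h1 := hsolF b (hhb.1) j
      have h2 := hsolF a ha j
      have h3 : (∫ u in (0:ℝ)..b, F j u) - ∫ u in (0:ℝ)..a, F j u = ∫ u in a..b, F j u :=
        intervalIntegral.integral_interval_sub_left (hFint j 0 b h0b hhb) (hFint j 0 a h0b hha)
      rw [h1, h2]
      linarith [h3]
    -- choice of the window
    obtain ⟨δ, hδ0, hδp⟩ := Metric.continuousAt_iff.1 (hφc.continuousAt (x := t₀))
      (1/4) (by norm_num)
    refine ⟨min (δ/2) 1, lt_min (by linarith) one_pos, ?_⟩
    set ε := min (δ/2) 1 with hεdef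
    have hε1 : ε ≤ 1 := min_le_right _ _
    have hεδ : ε < δ := lt_of_le_of_lt (min_le_left _ _) (by linarith)
    have hwin_phi : ∀ u ∈ Set.Icc t₀ (t₀+ε), φ u ≤ 1/4 := by
      intro u hu
      have hd : dist u t₀ < δ := by
        rw [Real.dist_eq, abs_of_nonneg (by linarith [hu.1])]
        linarith [hu.2]
      have := hδp hd
      rw [hφ0, Real.dist_eq, sub_zero] at this
      have := (abs_lt.1 this).2
      linarith
    have hW01 : Set.Icc t₀ (t₀+ε) ⊆ Set.Icc (0:ℝ) (t₀+1) := by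
      intro u hu
      exact ⟨le_trans ht₀ hu.1, le_trans hu.2 (by linarith)⟩
    -- projection on the simplex
    set p : ℝ → E → ℝ := fun u i => max (m u i) 0 / ∑ k, max (m u k) 0 with hpdef
    have hsge : ∀ u ∈ Set.Icc t₀ (t₀+ε), (3:ℝ)/4 ≤ ∑ k, max (m u k) 0 := by
      intro u hu
      have h1 : |(∑ j, m u j) - 1| ≤ 1/4 := (hDle u).trans (hwin_phi u hu)
      have h2 : (3:ℝ)/4 ≤ ∑ j, m u j := by
        have := (abs_le.1 h1).1; linarith
      have h3 : (∑ j, m u j) ≤ ∑ k, max (m u k) 0 :=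
        Finset.sum_le_sum fun k _ => le_max_left _ _
      linarith
    have hppos : ∀ u ∈ Set.Icc t₀ (t₀+ε), ∀ i, 0 ≤ p u i := by
      intro u hu i
      exact div_nonneg (le_max_right _ _) (by linarith [hsge u hu])
    have hpsum : ∀ u ∈ Set.Icc t₀ (t₀+ε), (∑ i, p u i) = 1 := by
      intro u hu
      simp only [hpdef]
      rw [← Finset.sum_div]
      exact div_self (by linarith [hsge u hu])
    have hpdist1 : ∀ u ∈ Set.Icc t₀ (t₀+ε), (∑ i, |m u i - p u i|) ≤ 2 * φ u := by
      intro u hu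
      have := proj_dist (m u) (by linarith [hsge u hu])
      simp only [hpdef, hφdef]
      exact this
    have hpd : ∀ u ∈ Set.Icc t₀ (t₀+ε), dist (m u) (p u) ≤ 2 * φ u := by
      intro u hu
      rw [dist_pi_le_iff (by linarith [hφnn u])]
      intro b
      rw [Real.dist_eq]
      have h1 : |m u b - p u b| ≤ ∑ i, |m u i - p u i| :=
        Finset.single_le_sum (f := fun i => |m u i - p u i|)
          (fun i _ => abs_nonneg _) (Finset.mem_univ b)
      exact h1.trans (hpdist1 u hu)
    have hQd : ∀ u ∈ Set.Icc t₀ (t₀+ε), ∀ i j a,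
        |Q (m u) i j a - Q (p u) i j a| ≤ 2 * L * φ u := by
      intro u hu i j a
      have h1 := (hQL i j a).dist_le_mul (m u) (p u)
      rw [Real.dist_eq] at h1
      have h2 := hpd u hu
      calc |Q (m u) i j a - Q (p u) i j a| ≤ L * dist (m u) (p u) := h1
        _ ≤ L * (2 * φ u) := by
            exact mul_le_mul_of_nonneg_left h2 hL0
        _ = 2 * L * φ u := by ring
    -- Estimate A
    have hA : ∀ u ∈ Set.Icc t₀ (t₀+ε), |∑ j, F j u|
        ≤ ((Fintype.card E : ℝ)^2 * (2*L*M)) * φ u := by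
      intro u hu
      have hrow := hQrow (p u) (hppos u hu) (hpsum u hu)
      have key : ∑ j, F j u
          = ∑ i, ∑ a, (m u i * π u i a) * (∑ j, (Q (m u) i j a - Q (p u) i j a)) := by
        simp only [hFdef]
        rw [Finset.sum_comm]
        refine Finset.sum_congr rfl fun i _ => ?_
        rw [Finset.sum_comm]
        refine Finset.sum_congr rfl fun a _ => ?_
        rw [Finset.sum_sub_distrib, hrow i a, sub_zero, Finset.mul_sum]
        exact Finset.sum_congr rfl fun j _ => by ring
      rw [key]
      have step : ∀ i a, |(m u i * π u i a) * (∑ j, (Q (m u) i j a - Q (p u) i j a))|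
          ≤ (M * π u i a) * ((Fintype.card E : ℝ) * (2*L*φ u)) := by
        intro i a
        rw [abs_mul, abs_mul, abs_of_nonneg (hπpos u i a)]
        have h2 : |∑ j, (Q (m u) i j a - Q (p u) i j a)|
            ≤ (Fintype.card E : ℝ) * (2*L*φ u) := by
          refine (Finset.abs_sum_le_sum_abs _ _).trans ?_
          calc ∑ j, |Q (m u) i j a - Q (p u) i j a| ≤ ∑ _j : E, 2*L*φ u :=
                Finset.sum_le_sum fun j _ => hQd u hu i j a
            _ = (Fintype.card E : ℝ) * (2*L*φ u) := by
                rw [Finset.sum_const, nsmul_eq_mul, Finset.card_univ]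
        exact mul_le_mul (mul_le_mul_of_nonneg_right (hmM u (hW01 hu) i) (hπpos u i a)) h2
          (abs_nonneg _) (mul_nonneg hM0 (hπpos u i a))
      calc |∑ i, ∑ a, (m u i * π u i a) * (∑ j, (Q (m u) i j a - Q (p u) i j a))|
          ≤ ∑ i, |∑ a, (m u i * π u i a) * (∑ j, (Q (m u) i j a - Q (p u) i j a))| :=
            Finset.abs_sum_le_sum_abs _ _
        _ ≤ ∑ i, ∑ a, |(m u i * π u i a) * (∑ j, (Q (m u) i j a - Q (p u) i j a))| :=
            Finset.sum_le_sum fun i _ => Finset.abs_sum_le_sum_abs _ _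
        _ ≤ ∑ i, ∑ a, (M * π u i a) * ((Fintype.card E : ℝ) * (2*L*φ u)) :=
            Finset.sum_le_sum fun i _ => Finset.sum_le_sum fun a _ => step i a
        _ = ((Fintype.card E : ℝ)^2 * (2*L*M)) * φ u := by
            have hrw : ∀ i : E, (∑ a, (M * π u i a) * ((Fintype.card E : ℝ) * (2*L*φ u)))
                = M * ((Fintype.card E : ℝ) * (2*L*φ u)) := by
              intro i
              rw [← Finset.sum_mul, ← Finset.mul_sum, hπsum u i, mul_one]
            rw [Finset.sum_congr rfl fun i _ => hrw i, Finset.sum_const, nsmul_eq_mul,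
              Finset.card_univ]
            ring
    -- Estimate B
    have hB : ∀ u ∈ Set.Icc t₀ (t₀+ε), ∀ j, m u j ≤ 0 →
        -((2*L + (2*C + 2*L)) * φ u) ≤ F j u := by
      intro u hu j hmj
      have hpn := hppos u hu
      have hps := hpsum u hu
      have hoff := hQoff (p u) hpn hps
      have hdiag : ∀ a, Q (p u) j j a ≤ 0 := by
        intro a
        have h0 := hQrow (p u) hpn hps j a
        have hnn : 0 ≤ ∑ k ∈ Finset.univ.erase j, Q (p u) j k a :=
          Finset.sum_nonneg fun k hk => hoff j k a (Ne.symm (Finset.ne_of_mem_erase hk))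
        have hsplit : Q (p u) j j a + ∑ k ∈ Finset.univ.erase j, Q (p u) j k a
            = ∑ k, Q (p u) j k a :=
          Finset.add_sum_erase Finset.univ (fun k => Q (p u) j k a) (Finset.mem_univ j)
        rw [h0] at hsplit
        linarith
      have hφ1 : φ u ≤ 1 := (hwin_phi u hu).trans (by norm_num)
      have hmjge : -(φ u) ≤ m u j := by
        have h1 := hNle u j
        have h2 : -(m u j) ≤ max (-(m u j)) 0 := le_max_left _ _
        linarith
      have hsplitF : F j u = (∑ a, m u j * Q (m u) j j a * π u j a)
          + ∑ i ∈ Finset.univ.erase j, ∑ a, m u i * Q (m u) i j a * π u i a := by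
        simp only [hFdef]
        rw [Finset.add_sum_erase _ (fun i => ∑ a, m u i * Q (m u) i j a * π u i a)
          (Finset.mem_univ j)]
      have hT1 : -((2*L) * φ u) ≤ ∑ a, m u j * Q (m u) j j a * π u j a := by
        have h1 : ∀ a : A, -((2*L) * φ u) * π u j a ≤ m u j * Q (m u) j j a * π u j a := by
          intro a
          have hq : Q (m u) j j a ≤ 2*L*φ u := by
            have hd := (abs_le.1 (hQd u hu j j a)).2
            have := hdiag a
            linarith
          have h2 : m u j * (2*L*φ u) ≤ m u j * Q (m u) j j a :=
            mul_le_mul_of_nonpos_left hq hmj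
          have h3 : -((2*L) * φ u) ≤ m u j * (2*L*φ u) := by
            have h4 : (-(φ u)) * (2*L*φ u) ≤ m u j * (2*L*φ u) :=
              mul_le_mul_of_nonneg_right hmjge (by positivity)
            nlinarith [mul_nonneg (mul_nonneg hL0 (hφnn u)) (sub_nonneg.2 hφ1)]
          exact mul_le_mul_of_nonneg_right (h3.trans h2) (hπpos u j a)
        calc -((2*L) * φ u) = ∑ a, -((2*L) * φ u) * π u j a := by
              rw [← Finset.mul_sum, hπsum u j, mul_one]
          _ ≤ _ := Finset.sum_le_sum fun a _ => h1 a
      have hT2 : -((2*C + 2*L) * φ u)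
          ≤ ∑ i ∈ Finset.univ.erase j, ∑ a, m u i * Q (m u) i j a * π u i a := by
        have key : ∀ i ∈ Finset.univ.erase j,
            -(C * |m u i - p u i| + p u i * (2*L*φ u))
              ≤ ∑ a, m u i * Q (m u) i j a * π u i a := by
          intro i hi
          have hij : i ≠ j := Finset.ne_of_mem_erase hi
          have per : ∀ a : A, p u i * Q (p u) i j a * π u i a
              - (C * |m u i - p u i| + p u i * (2*L*φ u)) * π u i a
              ≤ m u i * Q (m u) i j a * π u i a := by
            intro a
            have hd : |m u i * Q (m u) i j a - p u i * Q (p u) i j a|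
                ≤ C * |m u i - p u i| + p u i * (2*L*φ u) := by
              have he : m u i * Q (m u) i j a - p u i * Q (p u) i j a
                  = (m u i - p u i) * Q (m u) i j a
                    + p u i * (Q (m u) i j a - Q (p u) i j a) := by ring
              rw [he]
              refine (abs_add_le _ _).trans ?_
              rw [abs_mul, abs_mul, abs_of_nonneg (hpn i)]
              refine add_le_add ?_ ?_
              · rw [mul_comm (C:ℝ) _]
                exact mul_le_mul_of_nonneg_left (hQbdd (m u) i j a) (abs_nonneg _)
              · exact mul_le_mul_of_nonneg_left (hQd u hu i j a) (hpn i)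
            have h5 := (abs_le.1 hd).1
            have h6 : p u i * Q (p u) i j a - (C * |m u i - p u i| + p u i * (2*L*φ u))
                ≤ m u i * Q (m u) i j a := by linarith
            have h7 := mul_le_mul_of_nonneg_right h6 (hπpos u i a)
            calc p u i * Q (p u) i j a * π u i a
                - (C * |m u i - p u i| + p u i * (2*L*φ u)) * π u i a
                = (p u i * Q (p u) i j a
                    - (C * |m u i - p u i| + p u i * (2*L*φ u))) * π u i a := by ring
              _ ≤ m u i * Q (m u) i j a * π u i a := h7
          have hsum := Finset.sum_le_sum fun a (_ : a ∈ Finset.univ) => per a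
          have e1 : ∑ a, (p u i * Q (p u) i j a * π u i a
              - (C * |m u i - p u i| + p u i * (2*L*φ u)) * π u i a)
              = (∑ a, p u i * Q (p u) i j a * π u i a)
                - (C * |m u i - p u i| + p u i * (2*L*φ u)) := by
            rw [Finset.sum_sub_distrib, ← Finset.mul_sum, hπsum u i, mul_one]
          rw [e1] at hsum
          have hposQ : 0 ≤ ∑ a, p u i * Q (p u) i j a * π u i a :=
            Finset.sum_nonneg fun a _ =>
              mul_nonneg (mul_nonneg (hpn i) (hoff i j a hij)) (hπpos u i a)
          linarith
        have total := Finset.sum_le_sum key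
        have herr : ∑ i ∈ Finset.univ.erase j, (C * |m u i - p u i| + p u i * (2*L*φ u))
            ≤ (2*C + 2*L) * φ u := by
          rw [Finset.sum_add_distrib, ← Finset.mul_sum, ← Finset.sum_mul]
          have h1 : ∑ i ∈ Finset.univ.erase j, |m u i - p u i| ≤ 2 * φ u :=
            le_trans (Finset.sum_le_sum_of_subset_of_nonneg (Finset.subset_univ _)
              (fun i _ _ => abs_nonneg _)) (hpdist1 u hu)
          have h2 : ∑ i ∈ Finset.univ.erase j, p u i ≤ 1 :=
            le_trans (Finset.sum_le_sum_of_subset_of_nonneg (Finset.subset_univ _)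
              (fun i _ _ => hpn i)) (le_of_eq hps)
          have h3 : (C:ℝ) * ∑ i ∈ Finset.univ.erase j, |m u i - p u i| ≤ C * (2 * φ u) :=
            mul_le_mul_of_nonneg_left h1 hC0
          have h4 : (∑ i ∈ Finset.univ.erase j, p u i) * (2*L*φ u) ≤ 1 * (2*L*φ u) :=
            mul_le_mul_of_nonneg_right h2 (by positivity)
          nlinarith [hφnn u]
        have hsumneg : -((2*C + 2*L) * φ u)
            ≤ ∑ i ∈ Finset.univ.erase j, -(C * |m u i - p u i| + p u i * (2*L*φ u)) := by
          rw [Finset.sum_neg_distrib]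
          exact neg_le_neg herr
        linarith [hsumneg.trans total]
      rw [hsplitF]
      linarith
    -- Estimate on the negative part
    have hφint : ∀ a b : ℝ, IntervalIntegrable φ volume a b := fun a b =>
      hφc.intervalIntegrable a b
    have hNeg : ∀ t ∈ Set.Icc t₀ (t₀+ε), ∀ j,
        max (-(m t j)) 0 ≤ (2*L + (2*C + 2*L)) * ∫ u in t₀..t, φ u := by
      intro t ht j
      have htt₀ : t₀ ≤ t := ht.1
      have hintnn : 0 ≤ ∫ u in t₀..t, φ u :=
        intervalIntegral.integral_nonneg htt₀ fun u _ => hφnn u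
      have hK₃0 : (0:ℝ) ≤ 2*L + (2*C + 2*L) := by positivity
      rcases le_or_gt 0 (m t j) with h | h
      · rw [max_eq_right (neg_nonpos.2 h)]
        exact mul_nonneg hK₃0 hintnn
      · set S := {u : ℝ | u ∈ Set.Icc t₀ t ∧ 0 ≤ m u j} with hSdef
        have ht₀S : t₀ ∈ S := ⟨⟨le_refl _, htt₀⟩, hpos0 j⟩
        have hSne : S.Nonempty := ⟨t₀, ht₀S⟩
        have hSbdd : BddAbove S := ⟨t, fun v hv => hv.1.2⟩
        have hSclosed : IsClosed S := by
          have he : S = Set.Icc t₀ t ∩ {u : ℝ | 0 ≤ m u j} := rfl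
          rw [he]
          exact isClosed_Icc.inter (isClosed_le continuous_const (hmcont j))
        have hτS : sSup S ∈ S := hSclosed.csSup_mem hSne hSbdd
        set τ := sSup S with hτdef
        have hτt : τ ≤ t := hτS.1.2
        have hτt₀ : t₀ ≤ τ := hτS.1.1
        have hτ01 : τ ∈ Set.Icc (0:ℝ) (t₀+1) :=
          ⟨le_trans ht₀ hτt₀, le_trans hτt (le_trans ht.2 (by linarith))⟩
        have ht01 : t ∈ Set.Icc (0:ℝ) (t₀+1) := hW01 ht
        have hneg_mid : ∀ v, τ < v → v ≤ t → m v j ≤ 0 := by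
          intro v hv1 hv2
          by_contra hcon
          push_neg at hcon
          have hvS : v ∈ S := ⟨⟨le_trans hτt₀ hv1.le, hv2⟩, hcon.le⟩
          exact absurd (le_csSup hSbdd hvS) (not_le.2 hv1)
        have hmono : ∫ u in τ..t, (-((2*L + (2*C + 2*L)) * φ u)) ≤ ∫ u in τ..t, F j u := by
          refine intervalIntegral.integral_mono_ae_restrict hτt
            (((continuous_const.mul hφc).neg).intervalIntegrable _ _)
            (hFint j τ t hτ01 ht01) ?_
          have hne : ∀ᵐ u ∂(volume.restrict (Set.Icc τ t)), u ≠ τ := by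
            refine ae_restrict_of_ae ?_
            have he : {u : ℝ | ¬ u ≠ τ} = {τ} := by ext v; simp
            rw [ae_iff, he]
            exact measure_singleton τ
          filter_upwards [hne, ae_restrict_mem measurableSet_Icc] with u hu1 hu2
          have hτu : τ < u := lt_of_le_of_ne hu2.1 (Ne.symm hu1)
          have humem : u ∈ Set.Icc t₀ (t₀+ε) := ⟨le_trans hτt₀ hu2.1, le_trans hu2.2 ht.2⟩
          exact hB u humem j (hneg_mid u hτu hu2.2)
        have hidτ := hid τ t (le_trans ht₀ hτt₀) hτ01 ht01 j
        have hval : ∫ u in τ..t, (-((2*L + (2*C + 2*L)) * φ u))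
            = -((2*L + (2*C + 2*L)) * ∫ u in τ..t, φ u) := by
          rw [intervalIntegral.integral_neg, intervalIntegral.integral_const_mul]
        rw [hval] at hmono
        have hsplit2 : (∫ u in t₀..τ, φ u) + (∫ u in τ..t, φ u) = ∫ u in t₀..t, φ u :=
          intervalIntegral.integral_add_adjacent_intervals (hφint t₀ τ) (hφint τ t)
        have hφτnn : 0 ≤ ∫ u in t₀..τ, φ u :=
          intervalIntegral.integral_nonneg hτt₀ fun u _ => hφnn u
        have hmτ : 0 ≤ m τ j := hτS.2
        have h7 : -(m t j) ≤ (2*L + (2*C + 2*L)) * ∫ u in τ..t, φ u := by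
          rw [hidτ]
          linarith
        have h8 : (2*L + (2*C + 2*L)) * (∫ u in τ..t, φ u)
            ≤ (2*L + (2*C + 2*L)) * ∫ u in t₀..t, φ u := by
          apply mul_le_mul_of_nonneg_left _ hK₃0
          linarith
        exact max_le (by linarith) (mul_nonneg hK₃0 hintnn)
    -- Estimate on the sum deficiency
    have hD : ∀ t ∈ Set.Icc t₀ (t₀+ε), |(∑ j, m t j) - 1|
        ≤ ((Fintype.card E : ℝ)^2 * (2*L*M)) * ∫ u in t₀..t, φ u := by
      intro t ht
      have ht₀01 : t₀ ∈ Set.Icc (0:ℝ) (t₀+1) := ⟨ht₀, by linarith⟩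
      have ht01 : t ∈ Set.Icc (0:ℝ) (t₀+1) := hW01 ht
      have hsum_eq : (∑ j, m t j) - 1 = ∫ u in t₀..t, (∑ j, F j u) := by
        rw [intervalIntegral.integral_finset_sum (fun j _ => hFint j t₀ t ht₀01 ht01)]
        have h1 : ∑ j, m t j = ∑ j, (m t₀ j + ∫ u in t₀..t, F j u) :=
          Finset.sum_congr rfl fun j _ => hid t₀ t ht₀ ht₀01 ht01 j
        rw [h1, Finset.sum_add_distrib, hsum0]
        ring
      rw [hsum_eq]
      have hintF : IntervalIntegrable (fun u => ∑ j, F j u) volume t₀ t := by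
        have h := IntervalIntegrable.sum (μ := volume) (a := t₀) (b := t)
          (f := fun j => F j) Finset.univ (fun j _ => hFint j t₀ t ht₀01 ht01)
        have he : (∑ x : E, F x) = fun u => ∑ j : E, F j u := by
          ext u; simp [Finset.sum_apply]
        rwa [he] at h
      have hintφ : IntervalIntegrable
          (fun u => ((Fintype.card E : ℝ)^2 * (2*L*M)) * φ u) volume t₀ t :=
        (continuous_const.mul hφc).intervalIntegrable _ _
      have hKφ : ((Fintype.card E : ℝ)^2 * (2*L*M)) * ∫ u in t₀..t, φ u
          = ∫ u in t₀..t, ((Fintype.card E : ℝ)^2 * (2*L*M)) * φ u :=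
        (intervalIntegral.integral_const_mul _ _).symm
      rw [abs_le, hKφ]
      constructor
      · rw [← intervalIntegral.integral_neg]
        refine intervalIntegral.integral_mono_on ht.1 hintφ.neg hintF fun u hu => ?_
        have humem : u ∈ Set.Icc t₀ (t₀+ε) := ⟨hu.1, le_trans hu.2 ht.2⟩
        have := (abs_le.1 (hA u humem)).1
        linarith
      · refine intervalIntegral.integral_mono_on ht.1 hintF hintφ fun u hu => ?_
        have humem : u ∈ Set.Icc t₀ (t₀+ε) := ⟨hu.1, le_trans hu.2 ht.2⟩
        exact (abs_le.1 (hA u humem)).2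
    -- the Gronwall inequality
    have hK10 : (0:ℝ) ≤ (Fintype.card E : ℝ)^2 * (2*L*M) :=
      mul_nonneg (by positivity) (mul_nonneg (by positivity) hM0)
    have hK30 : (0:ℝ) ≤ 2*L + (2*C + 2*L) := by positivity
    have hKey : ∀ t ∈ Set.Icc t₀ (t₀+ε), φ t ≤
        ((Fintype.card E : ℝ)^2 * (2*L*M) + (Fintype.card E : ℝ) * (2*L + (2*C + 2*L)))
          * ∫ u in t₀..t, φ u := by
      intro t ht
      have h1 := hD t ht
      have h2 : ∑ j, max (-(m t j)) 0
          ≤ (Fintype.card E : ℝ) * ((2*L + (2*C + 2*L)) * ∫ u in t₀..t, φ u) := by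
        calc ∑ j, max (-(m t j)) 0
            ≤ ∑ _j : E, (2*L + (2*C + 2*L)) * ∫ u in t₀..t, φ u :=
              Finset.sum_le_sum fun j _ => hNeg t ht j
          _ = (Fintype.card E : ℝ) * ((2*L + (2*C + 2*L)) * ∫ u in t₀..t, φ u) := by
              rw [Finset.sum_const, nsmul_eq_mul, Finset.card_univ]
      have hexp : ((Fintype.card E : ℝ)^2 * (2*L*M)
            + (Fintype.card E : ℝ) * (2*L + (2*C + 2*L))) * ∫ u in t₀..t, φ u
          = ((Fintype.card E : ℝ)^2 * (2*L*M)) * (∫ u in t₀..t, φ u)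
            + (Fintype.card E : ℝ) * ((2*L + (2*C + 2*L)) * ∫ u in t₀..t, φ u) := by ring
      calc φ t = |(∑ j, m t j) - 1| + ∑ j, max (-(m t j)) 0 := by simp only [hφdef]
        _ ≤ _ := by rw [hexp]; exact add_le_add h1 h2
    set K : ℝ := (Fintype.card E : ℝ)^2 * (2*L*M)
      + (Fintype.card E : ℝ) * (2*L + (2*C + 2*L)) with hKdef
    set G : ℝ → ℝ := fun x => ∫ u in t₀..x, φ u with hGdef
    have hG' : ∀ x : ℝ, HasDerivAt G (φ x) x := by
      intro x
      exact intervalIntegral.integral_hasDerivAt_right (hφint t₀ x)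
        ⟨Set.univ, Filter.univ_mem, hφc.aestronglyMeasurable.restrict⟩ hφc.continuousAt
    have hGnn : ∀ x, t₀ ≤ x → 0 ≤ G x := fun x hx =>
      intervalIntegral.integral_nonneg hx fun u _ => hφnn u
    have hGron : ∀ x ∈ Set.Icc t₀ (t₀+ε), ‖G x‖ ≤ gronwallBound 0 K 0 (x - t₀) := by
      refine norm_le_gronwallBound_of_norm_deriv_right_le
        (fun x _ => (hG' x).continuousAt.continuousWithinAt)
        (fun x _ => (hG' x).hasDerivWithinAt) ?_ ?_
      · simp only [hGdef]
        rw [intervalIntegral.integral_same, norm_zero]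
      · intro x hx
        have hxI : x ∈ Set.Icc t₀ (t₀+ε) := ⟨hx.1, hx.2.le⟩
        rw [Real.norm_eq_abs, Real.norm_eq_abs, abs_of_nonneg (hφnn x),
          abs_of_nonneg (hGnn x hx.1)]
        have h1 := hKey x hxI
        have hGx : G x = ∫ u in t₀..x, φ u := rfl
        rw [hGx]
        linarith
    intro u hu
    have hG0 : (∫ x in t₀..u, φ x) = 0 := by
      have h1 := hGron u hu
      rw [gronwallBound_ε0, zero_mul] at h1
      have h2 := hGnn u hu.1
      have hGu : G u = ∫ x in t₀..u, φ x := rfl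
      rw [Real.norm_eq_abs, abs_of_nonneg h2, hGu] at h1
      rw [hGu] at h2
      linarith
    have hφu : φ u = 0 := by
      have h2 := hKey u hu
      rw [hG0, mul_zero] at h2
      exact le_antisymm h2 (hφnn u)
    constructor
    · intro j
      have h3 := hNle u j
      have h4 : -(m u j) ≤ max (-(m u j)) 0 := le_max_left _ _
      rw [hφu] at h3
      linarith
    · have h5 := hDle u
      rw [hφu] at h5
      have h6 := abs_nonneg ((∑ j, m u j) - 1)
      have h7 : |(∑ j, m u j) - 1| = 0 := le_antisymm h5 h6
      have h8 := abs_eq_zero.1 h7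
      linarith
  -- global argument
  intro T hT
  by_contra hbad
  set B := {u : ℝ | u ∈ Set.Icc 0 T ∧ ¬ ((∀ j, 0 ≤ m u j) ∧ (∑ j, m u j) = 1)} with hB
  have hTB : T ∈ B := ⟨⟨hT, le_refl T⟩, hbad⟩
  have hBne : B.Nonempty := ⟨T, hTB⟩
  have hBbdd : BddBelow B := ⟨0, fun u hu => hu.1.1⟩
  set t₀ := sInf B with ht₀def
  have ht₀0 : 0 ≤ t₀ := le_csInf hBne fun u hu => hu.1.1
  have ht₀T : t₀ ≤ T := csInf_le hBbdd hTB
  have hIco : ∀ u ∈ Set.Ico (0:ℝ) t₀, (∀ j, 0 ≤ m u j) ∧ (∑ j, m u j) = 1 := by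
    intro u hu
    by_contra hug
    have h := csInf_le hBbdd (show u ∈ B from ⟨⟨hu.1, hu.2.le.trans ht₀T⟩, hug⟩)
    exact absurd h (not_le.2 hu.2)
  have ht₀G : (∀ j, 0 ≤ m t₀ j) ∧ (∑ j, m t₀ j) = 1 := by
    rcases eq_or_lt_of_le ht₀0 with h | h
    · rw [← h]; exact ⟨hm0pos, hm0sum⟩
    · have hsub : Set.Ico (0:ℝ) t₀ ⊆ {u : ℝ | (∀ j, 0 ≤ m u j) ∧ (∑ j, m u j) = 1} := hIco
      have hcls : closure (Set.Ico (0:ℝ) t₀) ⊆ {u : ℝ | (∀ j, 0 ≤ m u j) ∧ (∑ j, m u j) = 1} :=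
        hgood_closed.closure_subset_iff.2 hsub
      have hcl : t₀ ∈ closure (Set.Ico (0:ℝ) t₀) := by
        rw [closure_Ico (ne_of_lt h)]
        exact ⟨ht₀0, le_refl _⟩
      exact hcls hcl
  obtain ⟨ε, hε, hgood_win⟩ := hlocal t₀ ht₀0 ht₀G.1 ht₀G.2
  have hlt : sInf B < t₀ + ε := by rw [← ht₀def]; linarith
  obtain ⟨b, hbB, hbe⟩ := (csInf_lt_iff hBbdd hBne).1 hlt
  have hb₀ : t₀ ≤ b := csInf_le hBbdd hbB
  exact hbB.2 (hgood_win b ⟨hb₀, hbe.le⟩)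
end

section
/- Under assumption (A1) (Q Lipschitz continuous in m with constant L, π measurable with values in the simplex), the integral equation m_j(t) = m_{j,0} + ∫₀^t ∑_{i,a} m_i(u) Q_{ija}(m(u)) π_{i,a}(u) du has a unique continuous solution on ℝ≥0 with values in the probability simplex. -/
open MeasureTheory intervalIntegral NNReal Set

set_option linter.unusedSectionVars false

namespace KolmogorovAux

variable {E A : Type*} [Fintype E] [Fintype A] [DecidableEq E]

noncomputable def clamp01 (r : ℝ) : ℝ := max 0 (min r 1)

lemma clamp01_nonneg (r : ℝ) : 0 ≤ clamp01 r := le_max_left _ _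

lemma clamp01_le_one (r : ℝ) : clamp01 r ≤ 1 := by
  unfold clamp01
  rcases le_or_gt r 1 with h | h
  · exact max_le zero_le_one (min_le_right _ _)
  · exact max_le zero_le_one (min_le_right _ _)

lemma clamp01_eq_self {r : ℝ} (h0 : 0 ≤ r) (h1 : r ≤ 1) : clamp01 r = r := by
  unfold clamp01
  rw [min_eq_left h1, max_eq_right h0]

lemma clamp01_of_nonpos {r : ℝ} (h : r ≤ 0) : clamp01 r = 0 := by
  unfold clamp01
  rw [max_eq_left]
  exact le_trans (min_le_left _ _) h

lemma clamp01_lip (a b : ℝ) : |clamp01 a - clamp01 b| ≤ |a - b| := by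
  unfold clamp01
  refine le_trans (abs_max_sub_max_le_max _ _ _ _) ?_
  simp only [sub_self, abs_zero]
  refine max_le (by positivity) ?_
  refine le_trans (abs_min_sub_min_le_max _ _ _ _) ?_
  simp [abs_nonneg]

lemma continuous_clamp01 : Continuous clamp01 := by
  unfold clamp01; fun_prop



/-- reciprocal of `max s 1`. -/
noncomputable def pinv (s : ℝ) : ℝ := 1 / max s 1

lemma pinv_pos (s : ℝ) : 0 < pinv s := by
  unfold pinv
  positivity

lemma pinv_le_one (s : ℝ) : pinv s ≤ 1 := by
  unfold pinv
  rw [div_le_one (by positivity)]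
  exact le_max_right _ _

lemma pinv_lip (a b : ℝ) : |pinv a - pinv b| ≤ |a - b| := by
  unfold pinv
  have ha : (1:ℝ) ≤ max a 1 := le_max_right _ _
  have hb : (1:ℝ) ≤ max b 1 := le_max_right _ _
  have ha0 : (0:ℝ) < max a 1 := lt_of_lt_of_le one_pos ha
  have hb0 : (0:ℝ) < max b 1 := lt_of_lt_of_le one_pos hb
  have h1 : 1 / max a 1 - 1 / max b 1 = (max b 1 - max a 1) / (max a 1 * max b 1) := by
    field_simp
  rw [h1, abs_div, abs_of_pos (mul_pos ha0 hb0)]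
  have h2 : |max b 1 - max a 1| ≤ |b - a| := abs_max_sub_max_le_abs _ _ _
  calc |max b 1 - max a 1| / (max a 1 * max b 1) ≤ |max b 1 - max a 1| :=
        div_le_self (abs_nonneg _) (by nlinarith)
    _ ≤ |b - a| := h2
    _ = |a - b| := abs_sub_comm _ _

lemma continuous_pinv : Continuous pinv := by
  unfold pinv
  apply Continuous.div continuous_const (by fun_prop)
  intro x
  have : (1:ℝ) ≤ max x 1 := le_max_right _ _
  linarith

/-- Sum of clamped coordinates. -/
noncomputable def sC (x : E → ℝ) : ℝ := ∑ k, clamp01 (x k)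

lemma sC_nonneg (x : E → ℝ) : 0 ≤ sC x :=
  Finset.sum_nonneg fun _ _ => clamp01_nonneg _

lemma sC_lip (x y : E → ℝ) : |sC x - sC y| ≤ (Fintype.card E : ℝ) * dist x y := by
  unfold sC
  rw [← Finset.sum_sub_distrib]
  refine le_trans (Finset.abs_sum_le_sum_abs _ _) ?_
  calc ∑ k, |clamp01 (x k) - clamp01 (y k)| ≤ ∑ k : E, dist x y := by
        refine Finset.sum_le_sum fun k _ => ?_
        refine le_trans (clamp01_lip _ _) ?_
        rw [← Real.dist_eq]
        exact dist_le_pi_dist x y k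
    _ = (Fintype.card E : ℝ) * dist x y := by
        rw [Finset.sum_const, Finset.card_univ, nsmul_eq_mul]

lemma continuous_sC : Continuous (sC (E := E)) := by
  unfold sC
  exact continuous_finset_sum _ fun k _ => continuous_clamp01.comp (continuous_apply k)

/-- Lipschitz retraction of `E → ℝ` onto the probability simplex. -/
noncomputable def proj (i₀ : E) (x : E → ℝ) : E → ℝ :=
  fun i => clamp01 (x i) * pinv (sC x) + (if i = i₀ then max 0 (1 - sC x) else 0)

lemma proj_nonneg (i₀ : E) (x : E → ℝ) (i : E) : 0 ≤ proj i₀ x i := by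
  unfold proj
  have := clamp01_nonneg (x i)
  have := (pinv_pos (sC x)).le
  have : (0:ℝ) ≤ max 0 (1 - sC x) := le_max_left _ _
  positivity

lemma proj_sum (i₀ : E) (x : E → ℝ) : ∑ i, proj i₀ x i = 1 := by
  unfold proj
  rw [Finset.sum_add_distrib, ← Finset.sum_mul]
  have hs : ∑ i, (if i = i₀ then max 0 (1 - sC x) else 0) = max 0 (1 - sC x) := by
    simp
  rw [hs]
  show sC x * pinv (sC x) + max 0 (1 - sC x) = 1
  unfold pinv
  rcases le_or_gt 1 (sC x) with h | h
  · rw [max_eq_left (by linarith), max_eq_left (by linarith), mul_one_div,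
      div_self (by linarith), add_zero]
  · rw [max_eq_right h.le, max_eq_right (by linarith)]
    simp

lemma proj_eq_self {i₀ : E} {x : E → ℝ} (h0 : ∀ i, 0 ≤ x i) (h1 : ∑ i, x i = 1) :
    proj i₀ x = x := by
  have hle : ∀ i, x i ≤ 1 := by
    intro i
    rw [← h1]
    exact Finset.single_le_sum (fun k _ => h0 k) (Finset.mem_univ i)
  have hc : ∀ i, clamp01 (x i) = x i := fun i => clamp01_eq_self (h0 i) (hle i)
  have hsC : sC x = 1 := by unfold sC; simp only [hc]; exact h1
  funext i
  unfold proj pinv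
  rw [hsC, hc]
  simp

lemma proj_lip (i₀ : E) (x y : E → ℝ) (i : E) :
    |proj i₀ x i - proj i₀ y i| ≤ (1 + 2 * (Fintype.card E : ℝ)) * dist x y := by
  have hd : |clamp01 (x i) - clamp01 (y i)| ≤ dist x y := by
    refine le_trans (clamp01_lip _ _) ?_
    rw [← Real.dist_eq]; exact dist_le_pi_dist x y i
  have hs : |sC x - sC y| ≤ (Fintype.card E : ℝ) * dist x y := sC_lip x y
  have hpv : |pinv (sC x) - pinv (sC y)| ≤ (Fintype.card E : ℝ) * dist x y :=
    le_trans (pinv_lip _ _) hs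
  have hmax : |max 0 (1 - sC x) - max 0 (1 - sC y)| ≤ (Fintype.card E : ℝ) * dist x y := by
    refine le_trans ?_ hs
    refine le_trans (abs_max_sub_max_le_max _ _ _ _) ?_
    simp only [sub_self, abs_zero, sub_sub_sub_cancel_left]
    refine max_le (abs_nonneg _) ?_
    rw [abs_sub_comm]
  unfold proj
  have key : clamp01 (x i) * pinv (sC x) - clamp01 (y i) * pinv (sC y)
      = (clamp01 (x i) - clamp01 (y i)) * pinv (sC x)
        + clamp01 (y i) * (pinv (sC x) - pinv (sC y)) := by ring
  have h1 : |clamp01 (x i) * pinv (sC x) - clamp01 (y i) * pinv (sC y)|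
      ≤ dist x y + (Fintype.card E : ℝ) * dist x y := by
    rw [key]
    refine le_trans (abs_add_le _ _) (add_le_add ?_ ?_)
    · rw [abs_mul]
      calc |clamp01 (x i) - clamp01 (y i)| * |pinv (sC x)|
          ≤ |clamp01 (x i) - clamp01 (y i)| * 1 := by
            refine mul_le_mul_of_nonneg_left ?_ (abs_nonneg _)
            rw [abs_of_pos (pinv_pos _)]
            exact pinv_le_one _
        _ ≤ dist x y := by rw [mul_one]; exact hd
    · rw [abs_mul]
      calc |clamp01 (y i)| * |pinv (sC x) - pinv (sC y)|
          ≤ 1 * |pinv (sC x) - pinv (sC y)| := by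
            refine mul_le_mul_of_nonneg_right ?_ (abs_nonneg _)
            rw [abs_of_nonneg (clamp01_nonneg _)]
            exact clamp01_le_one _
        _ ≤ (Fintype.card E : ℝ) * dist x y := by rw [one_mul]; exact hpv
  calc |(clamp01 (x i) * pinv (sC x) + (if i = i₀ then max 0 (1 - sC x) else 0))
        - (clamp01 (y i) * pinv (sC y) + (if i = i₀ then max 0 (1 - sC y) else 0))|
      ≤ |clamp01 (x i) * pinv (sC x) - clamp01 (y i) * pinv (sC y)|
        + |(if i = i₀ then max 0 (1 - sC x) else 0) - (if i = i₀ then max 0 (1 - sC y) else 0)| := by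
        have : (clamp01 (x i) * pinv (sC x) + (if i = i₀ then max 0 (1 - sC x) else 0))
            - (clamp01 (y i) * pinv (sC y) + (if i = i₀ then max 0 (1 - sC y) else 0))
            = (clamp01 (x i) * pinv (sC x) - clamp01 (y i) * pinv (sC y))
              + ((if i = i₀ then max 0 (1 - sC x) else 0) - (if i = i₀ then max 0 (1 - sC y) else 0)) := by
          ring
        rw [this]
        exact abs_add_le _ _
    _ ≤ (dist x y + (Fintype.card E : ℝ) * dist x y) + (Fintype.card E : ℝ) * dist x y := by
        refine add_le_add h1 ?_
        by_cases h : i = i₀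
        · simpa [h] using hmax
        · simpa [h] using mul_nonneg (Nat.cast_nonneg _) dist_nonneg
    _ = (1 + 2 * (Fintype.card E : ℝ)) * dist x y := by ring

lemma continuous_proj (i₀ : E) : Continuous (proj i₀) := by
  refine continuous_pi fun i => ?_
  unfold proj
  refine Continuous.add ?_ ?_
  · exact (continuous_clamp01.comp (continuous_apply i)).mul (continuous_pinv.comp continuous_sC)
  · by_cases h : i = i₀ <;> simp only [h, if_true, if_false]
    · exact (continuous_const.sub continuous_sC).max continuous_const |>.congr (by
        intro x; rw [max_comm]; rfl)
    · exact continuous_const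

lemma proj_dist (i₀ : E) (x y : E → ℝ) :
    dist (proj i₀ x) (proj i₀ y) ≤ (1 + 2 * (Fintype.card E : ℝ)) * dist x y := by
  rw [dist_pi_le_iff (by positivity)]
  intro i
  rw [Real.dist_eq]
  exact proj_lip i₀ x y i



section RHS

variable {E A : Type*} [Fintype E] [Fintype A] [DecidableEq E]
variable (L : ℝ≥0) (Q : (E → ℝ) → E → E → A → ℝ) (π : ℝ → E → A → ℝ) (i₀ : E)

/-- The modified (globally Lipschitz) right-hand side of the Kolmogorov equation. -/
noncomputable def rhs (t : ℝ) (x : E → ℝ) (j : E) : ℝ :=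
  ∑ i, ∑ a, clamp01 (x i) * Q (proj i₀ x) i j a * π t i a

/-- A bound for `|Q y i j a|` over the simplex. -/
noncomputable def CQ : ℝ := (∑ i, ∑ j, ∑ a, |Q (proj i₀ (fun _ => 0)) i j a|) + L

noncomputable def BB : ℝ := (Fintype.card E : ℝ) * CQ L Q i₀

noncomputable def KK : ℝ :=
  (Fintype.card E : ℝ) * (CQ L Q i₀ + L * (1 + 2 * (Fintype.card E : ℝ)))

lemma coord_le_one {y : E → ℝ} (h0 : ∀ i, 0 ≤ y i) (h1 : ∑ i, y i = 1) (i : E) : y i ≤ 1 := by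
  rw [← h1]
  exact Finset.single_le_sum (fun k _ => h0 k) (Finset.mem_univ i)

lemma CQ_nonneg : 0 ≤ CQ L Q i₀ := by
  unfold CQ
  have : (0:ℝ) ≤ ∑ i, ∑ j, ∑ a, |Q (proj i₀ (fun _ => 0)) i j a| := by positivity
  positivity

lemma Q_bound (hQL : ∀ i j a, LipschitzWith L (fun m => Q m i j a))
    {y : E → ℝ} (h0 : ∀ i, 0 ≤ y i) (h1 : ∑ i, y i = 1) (i j : E) (a : A) :
    |Q y i j a| ≤ CQ L Q i₀ := by
  set y0 : E → ℝ := proj i₀ (fun _ => 0) with hy0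
  have hy00 : ∀ i, 0 ≤ y0 i := proj_nonneg i₀ _
  have hy01 : ∑ i, y0 i = 1 := proj_sum i₀ _
  have hdist : dist y y0 ≤ 1 := by
    rw [dist_pi_le_iff zero_le_one]
    intro k
    rw [Real.dist_eq, abs_sub_le_iff]
    constructor
    · have := coord_le_one h0 h1 k; have := hy00 k; linarith
    · have := coord_le_one hy00 hy01 k; have := h0 k; linarith
  have hlip : |Q y i j a - Q y0 i j a| ≤ (L : ℝ) * 1 := by
    rw [← Real.dist_eq]
    exact le_trans ((hQL i j a).dist_le_mul y y0) (by
      exact mul_le_mul_of_nonneg_left hdist (NNReal.coe_nonneg L))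
  have hterm : |Q y0 i j a| ≤ ∑ i', ∑ j', ∑ a', |Q y0 i' j' a'| := by
    calc |Q y0 i j a| ≤ ∑ a', |Q y0 i j a'| :=
          Finset.single_le_sum (f := fun a' => |Q y0 i j a'|)
            (fun _ _ => abs_nonneg _) (Finset.mem_univ a)
      _ ≤ ∑ j', ∑ a', |Q y0 i j' a'| :=
          Finset.single_le_sum (f := fun j' => ∑ a', |Q y0 i j' a'|)
            (fun _ _ => Finset.sum_nonneg fun _ _ => abs_nonneg _) (Finset.mem_univ j)
      _ ≤ ∑ i', ∑ j', ∑ a', |Q y0 i' j' a'| :=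
          Finset.single_le_sum (f := fun i' => ∑ j', ∑ a', |Q y0 i' j' a'|)
            (fun _ _ => Finset.sum_nonneg fun _ _ => Finset.sum_nonneg fun _ _ => abs_nonneg _)
            (Finset.mem_univ i)
  unfold CQ
  have : |Q y i j a| ≤ |Q y0 i j a| + |Q y i j a - Q y0 i j a| := by
    have := abs_sub_abs_le_abs_sub (Q y i j a) (Q y0 i j a)
    linarith [abs_nonneg (Q y i j a)]
  rw [← hy0]
  linarith

lemma π_le_one (hπpos : ∀ t i a, 0 ≤ π t i a) (hπsum : ∀ t i, (∑ a, π t i a) = 1)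
    (t : ℝ) (i : E) (a : A) : π t i a ≤ 1 := by
  rw [← hπsum t i]
  exact Finset.single_le_sum (fun k _ => hπpos t i k) (Finset.mem_univ a)

lemma rhs_bound (hQL : ∀ i j a, LipschitzWith L (fun m => Q m i j a))
    (hπpos : ∀ t i a, 0 ≤ π t i a) (hπsum : ∀ t i, (∑ a, π t i a) = 1)
    (t : ℝ) (x : E → ℝ) (j : E) : |rhs Q π i₀ t x j| ≤ BB L Q i₀ := by
  unfold rhs BB
  have hQb := Q_bound L Q i₀ hQL (proj_nonneg i₀ x) (proj_sum i₀ x)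
  calc |∑ i, ∑ a, clamp01 (x i) * Q (proj i₀ x) i j a * π t i a|
      ≤ ∑ i, |∑ a, clamp01 (x i) * Q (proj i₀ x) i j a * π t i a| :=
        Finset.abs_sum_le_sum_abs _ _
    _ ≤ ∑ i : E, CQ L Q i₀ := by
        refine Finset.sum_le_sum fun i _ => ?_
        calc |∑ a, clamp01 (x i) * Q (proj i₀ x) i j a * π t i a|
            ≤ ∑ a, |clamp01 (x i) * Q (proj i₀ x) i j a * π t i a| :=
              Finset.abs_sum_le_sum_abs _ _
          _ ≤ ∑ a, CQ L Q i₀ * π t i a := by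
              refine Finset.sum_le_sum fun a _ => ?_
              rw [abs_mul, abs_mul, abs_of_nonneg (clamp01_nonneg _),
                abs_of_nonneg (hπpos t i a)]
              have h1 : clamp01 (x i) * |Q (proj i₀ x) i j a| ≤ 1 * (CQ L Q i₀) :=
                mul_le_mul (clamp01_le_one _) (hQb i j a) (abs_nonneg _) zero_le_one
              rw [one_mul] at h1
              exact mul_le_mul_of_nonneg_right h1 (hπpos t i a)
          _ = CQ L Q i₀ := by rw [← Finset.mul_sum, hπsum t i, mul_one]
    _ = (Fintype.card E : ℝ) * CQ L Q i₀ := by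
        rw [Finset.sum_const, Finset.card_univ, nsmul_eq_mul]

lemma KK_nonneg : 0 ≤ KK L Q i₀ := by
  unfold KK
  have := CQ_nonneg L Q i₀
  positivity

lemma rhs_lip (hQL : ∀ i j a, LipschitzWith L (fun m => Q m i j a))
    (hπpos : ∀ t i a, 0 ≤ π t i a) (hπsum : ∀ t i, (∑ a, π t i a) = 1)
    (t : ℝ) (x y : E → ℝ) (j : E) :
    |rhs Q π i₀ t x j - rhs Q π i₀ t y j| ≤ KK L Q i₀ * dist x y := by
  unfold rhs KK
  have hQbx := Q_bound L Q i₀ hQL (proj_nonneg i₀ x) (proj_sum i₀ x)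
  set C1 : ℝ := CQ L Q i₀ + L * (1 + 2 * (Fintype.card E : ℝ)) with hC1
  have key : ∀ i a, |clamp01 (x i) * Q (proj i₀ x) i j a * π t i a
      - clamp01 (y i) * Q (proj i₀ y) i j a * π t i a| ≤ C1 * dist x y * π t i a := by
    intro i a
    have hsplit : clamp01 (x i) * Q (proj i₀ x) i j a * π t i a
        - clamp01 (y i) * Q (proj i₀ y) i j a * π t i a
        = ((clamp01 (x i) - clamp01 (y i)) * Q (proj i₀ x) i j a
          + clamp01 (y i) * (Q (proj i₀ x) i j a - Q (proj i₀ y) i j a)) * π t i a := by ring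
    rw [hsplit, abs_mul, abs_of_nonneg (hπpos t i a)]
    refine mul_le_mul_of_nonneg_right ?_ (hπpos t i a)
    refine le_trans (abs_add_le _ _) ?_
    have h1 : |(clamp01 (x i) - clamp01 (y i)) * Q (proj i₀ x) i j a|
        ≤ CQ L Q i₀ * dist x y := by
      rw [abs_mul]
      have hd : |clamp01 (x i) - clamp01 (y i)| ≤ dist x y := by
        refine le_trans (clamp01_lip _ _) ?_
        rw [← Real.dist_eq]; exact dist_le_pi_dist x y i
      calc |clamp01 (x i) - clamp01 (y i)| * |Q (proj i₀ x) i j a|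
          ≤ dist x y * CQ L Q i₀ :=
            mul_le_mul hd (hQbx i j a) (abs_nonneg _) dist_nonneg
        _ = CQ L Q i₀ * dist x y := mul_comm _ _
    have h2 : |clamp01 (y i) * (Q (proj i₀ x) i j a - Q (proj i₀ y) i j a)|
        ≤ (L : ℝ) * (1 + 2 * (Fintype.card E : ℝ)) * dist x y := by
      rw [abs_mul, abs_of_nonneg (clamp01_nonneg _)]
      have hQd : |Q (proj i₀ x) i j a - Q (proj i₀ y) i j a|
          ≤ (L : ℝ) * ((1 + 2 * (Fintype.card E : ℝ)) * dist x y) := by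
        rw [← Real.dist_eq]
        exact le_trans ((hQL i j a).dist_le_mul _ _)
          (mul_le_mul_of_nonneg_left (proj_dist i₀ x y) (NNReal.coe_nonneg L))
      calc clamp01 (y i) * |Q (proj i₀ x) i j a - Q (proj i₀ y) i j a|
          ≤ 1 * ((L : ℝ) * ((1 + 2 * (Fintype.card E : ℝ)) * dist x y)) :=
            mul_le_mul (clamp01_le_one _) hQd (abs_nonneg _) zero_le_one
        _ = (L : ℝ) * (1 + 2 * (Fintype.card E : ℝ)) * dist x y := by ring
    rw [hC1]
    have : (CQ L Q i₀ + (L:ℝ) * (1 + 2 * (Fintype.card E : ℝ))) * dist x y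
        = CQ L Q i₀ * dist x y + (L:ℝ) * (1 + 2 * (Fintype.card E : ℝ)) * dist x y := by ring
    rw [this]
    exact add_le_add h1 h2
  calc |∑ i, ∑ a, clamp01 (x i) * Q (proj i₀ x) i j a * π t i a
        - ∑ i, ∑ a, clamp01 (y i) * Q (proj i₀ y) i j a * π t i a|
      = |∑ i, ∑ a, (clamp01 (x i) * Q (proj i₀ x) i j a * π t i a
          - clamp01 (y i) * Q (proj i₀ y) i j a * π t i a)| := by
        rw [← Finset.sum_sub_distrib]
        congr 1
        refine Finset.sum_congr rfl fun i _ => ?_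
        rw [← Finset.sum_sub_distrib]
    _ ≤ ∑ i, |∑ a, (clamp01 (x i) * Q (proj i₀ x) i j a * π t i a
          - clamp01 (y i) * Q (proj i₀ y) i j a * π t i a)| := Finset.abs_sum_le_sum_abs _ _
    _ ≤ ∑ i : E, C1 * dist x y := by
        refine Finset.sum_le_sum fun i _ => ?_
        calc |∑ a, (clamp01 (x i) * Q (proj i₀ x) i j a * π t i a
              - clamp01 (y i) * Q (proj i₀ y) i j a * π t i a)|
            ≤ ∑ a, |clamp01 (x i) * Q (proj i₀ x) i j a * π t i a
              - clamp01 (y i) * Q (proj i₀ y) i j a * π t i a| := Finset.abs_sum_le_sum_abs _ _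
          _ ≤ ∑ a, C1 * dist x y * π t i a := Finset.sum_le_sum fun a _ => key i a
          _ = C1 * dist x y := by rw [← Finset.mul_sum, hπsum t i, mul_one]
    _ = (Fintype.card E : ℝ) * C1 * dist x y := by
        rw [Finset.sum_const, Finset.card_univ, nsmul_eq_mul, mul_assoc]
  
lemma rhs_sum (hQrow : ∀ m : E → ℝ, (∀ i, 0 ≤ m i) → (∑ i, m i) = 1 →
      ∀ i a, (∑ j, Q m i j a) = 0) (t : ℝ) (x : E → ℝ) :
    ∑ j, rhs Q π i₀ t x j = 0 := by
  unfold rhs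
  rw [Finset.sum_comm]
  refine Finset.sum_eq_zero fun i _ => ?_
  rw [Finset.sum_comm]
  refine Finset.sum_eq_zero fun a _ => ?_
  have : ∑ j, clamp01 (x i) * Q (proj i₀ x) i j a * π t i a
      = (clamp01 (x i) * π t i a) * ∑ j, Q (proj i₀ x) i j a := by
    rw [Finset.mul_sum]
    refine Finset.sum_congr rfl fun j _ => by ring
  rw [this, hQrow _ (proj_nonneg i₀ x) (proj_sum i₀ x) i a, mul_zero]

lemma rhs_nonneg_of_nonpos
    (hQoff : ∀ m : E → ℝ, (∀ i, 0 ≤ m i) → (∑ i, m i) = 1 →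
      ∀ i j a, i ≠ j → 0 ≤ Q m i j a)
    (hπpos : ∀ t i a, 0 ≤ π t i a) (t : ℝ) (x : E → ℝ) {j : E} (hxj : x j ≤ 0) :
    0 ≤ rhs Q π i₀ t x j := by
  unfold rhs
  refine Finset.sum_nonneg fun i _ => Finset.sum_nonneg fun a _ => ?_
  by_cases h : i = j
  · subst h
    rw [clamp01_of_nonpos hxj, zero_mul, zero_mul]
  · exact mul_nonneg (mul_nonneg (clamp01_nonneg _)
      (hQoff _ (proj_nonneg i₀ x) (proj_sum i₀ x) i j a h)) (hπpos t i a)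

lemma rhs_eq_orig {x : E → ℝ} (h0 : ∀ i, 0 ≤ x i) (h1 : ∑ i, x i = 1) (t : ℝ) (j : E) :
    rhs Q π i₀ t x j = ∑ i, ∑ a, x i * Q x i j a * π t i a := by
  unfold rhs
  rw [proj_eq_self h0 h1]
  refine Finset.sum_congr rfl fun i _ => Finset.sum_congr rfl fun a _ => ?_
  rw [clamp01_eq_self (h0 i) (coord_le_one h0 h1 i)]

lemma rhs_measurable (hQL : ∀ i j a, LipschitzWith L (fun m => Q m i j a))
    (hπmeas : ∀ i a, Measurable (fun t => π t i a))
    {m : ℝ → E → ℝ} (hm : Continuous m) (j : E) :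
    Measurable fun u => rhs Q π i₀ u (m u) j := by
  unfold rhs
  refine Finset.measurable_sum _ fun i _ => Finset.measurable_sum _ fun a _ => ?_
  refine Measurable.mul (Measurable.mul ?_ ?_) (hπmeas i a)
  · exact (continuous_clamp01.comp ((continuous_apply i).comp hm)).measurable
  · exact ((hQL i j a).continuous.comp ((continuous_proj i₀).comp hm)).measurable

lemma rhs_intInt (hQL : ∀ i j a, LipschitzWith L (fun m => Q m i j a))
    (hπmeas : ∀ i a, Measurable (fun t => π t i a))
    (hπpos : ∀ t i a, 0 ≤ π t i a) (hπsum : ∀ t i, (∑ a, π t i a) = 1)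
    {m : ℝ → E → ℝ} (hm : Continuous m) (j : E) (a b : ℝ) :
    IntervalIntegrable (fun u => rhs Q π i₀ u (m u) j) volume a b := by
  refine IntervalIntegrable.mono_fun' (g := fun _ => BB L Q i₀) intervalIntegrable_const
    ((rhs_measurable L Q π i₀ hQL hπmeas hm j).aestronglyMeasurable) ?_
  exact ae_of_all _ fun u => by
    show ‖rhs Q π i₀ u (m u) j‖ ≤ BB L Q i₀
    rw [Real.norm_eq_abs]
    exact rhs_bound L Q π i₀ hQL hπpos hπsum u (m u) j

end RHS



section Picard

open BoundedContinuousFunction Function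

variable {E A : Type*} [Fintype E] [Fintype A] [DecidableEq E]

noncomputable def τc (T t : ℝ) : ℝ := max 0 (min t T)

lemma τc_nonneg (T t : ℝ) : 0 ≤ τc T t := le_max_left _ _

lemma τc_le {T : ℝ} (hT : 0 ≤ T) (t : ℝ) : τc T t ≤ T :=
  max_le hT (min_le_right _ _)

lemma τc_le_max (T t : ℝ) : τc T t ≤ max T 0 :=
  max_le (le_max_right _ _) (le_trans (min_le_right _ _) (le_max_left _ _))

lemma τc_eq_self {T t : ℝ} (h0 : 0 ≤ t) (hT : t ≤ T) : τc T t = t := by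
  unfold τc
  rw [min_eq_left hT, max_eq_right h0]

lemma continuous_τc (T : ℝ) : Continuous (τc T) := by
  unfold τc; fun_prop

variable (L : ℝ≥0) (Q : (E → ℝ) → E → E → A → ℝ) (π : ℝ → E → A → ℝ) (i₀ : E)

/-- The Picard operator for the (modified) Kolmogorov equation, frozen outside `[0, T]`. -/
noncomputable def Phi (hQL : ∀ i j a, LipschitzWith L (fun m => Q m i j a))
    (hπmeas : ∀ i a, Measurable (fun t => π t i a))
    (hπpos : ∀ t i a, 0 ≤ π t i a) (hπsum : ∀ t i, (∑ a, π t i a) = 1)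
    (m₀ : E → ℝ) (T : ℝ) (m : ℝ →ᵇ (E → ℝ)) : ℝ →ᵇ (E → ℝ) :=
  BoundedContinuousFunction.mkOfBound
    ⟨fun t j => m₀ j + ∫ u in (0:ℝ)..(τc T t), rhs Q π i₀ u (m u) j, by
      refine continuous_pi fun j => ?_
      exact continuous_const.add
        ((intervalIntegral.continuous_primitive
          (rhs_intInt L Q π i₀ hQL hπmeas hπpos hπsum m.continuous j) 0).comp
            (continuous_τc T))⟩
    (2 * (BB L Q i₀ * max T 0)) (by
      intro t t'
      have hBB0 : 0 ≤ BB L Q i₀ := mul_nonneg (Nat.cast_nonneg _) (CQ_nonneg L Q i₀)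
      have hM0 : (0:ℝ) ≤ max T 0 := le_max_right _ _
      rw [dist_pi_le_iff (by positivity)]
      intro j
      rw [Real.dist_eq]
      simp only [ContinuousMap.coe_mk]
      rw [add_sub_add_left_eq_sub]
      have key : ∀ s : ℝ, |∫ u in (0:ℝ)..(τc T s), rhs Q π i₀ u (m u) j|
          ≤ BB L Q i₀ * max T 0 := by
        intro s
        have h1 : ‖∫ u in (0:ℝ)..(τc T s), rhs Q π i₀ u (m u) j‖ ≤ BB L Q i₀ * |τc T s - 0| :=
          intervalIntegral.norm_integral_le_of_norm_le_const (fun u _ => by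
            rw [Real.norm_eq_abs]
            exact rhs_bound L Q π i₀ hQL hπpos hπsum u (m u) j)
        rw [Real.norm_eq_abs, sub_zero, abs_of_nonneg (τc_nonneg T s)] at h1
        exact le_trans h1 (mul_le_mul_of_nonneg_left (τc_le_max T s) hBB0)
      rw [sub_eq_add_neg]
      refine le_trans (abs_add_le _ _) ?_
      rw [abs_neg]
      linarith [key t, key t'])


variable (hQL : ∀ i j a, LipschitzWith L (fun m => Q m i j a))
  (hπmeas : ∀ i a, Measurable (fun t => π t i a))
  (hπpos : ∀ t i a, 0 ≤ π t i a) (hπsum : ∀ t i, (∑ a, π t i a) = 1)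
  (m₀ : E → ℝ)

lemma Phi_apply (T : ℝ) (m : ℝ →ᵇ (E → ℝ)) (t : ℝ) (j : E) :
    Phi L Q π i₀ hQL hπmeas hπpos hπsum m₀ T m t j
      = m₀ j + ∫ u in (0:ℝ)..(τc T t), rhs Q π i₀ u (m u) j := rfl

lemma Phi_dist (T : ℝ) (m m' : ℝ →ᵇ (E → ℝ)) (t : ℝ) :
    dist (Phi L Q π i₀ hQL hπmeas hπpos hπsum m₀ T m t)
        (Phi L Q π i₀ hQL hπmeas hπpos hπsum m₀ T m' t)
      ≤ ∫ u in (0:ℝ)..(τc T t), KK L Q i₀ * dist (m u) (m' u) := by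
  have ha : 0 ≤ τc T t := τc_nonneg T t
  have h0 : 0 ≤ ∫ u in (0:ℝ)..(τc T t), KK L Q i₀ * dist (m u) (m' u) :=
    intervalIntegral.integral_nonneg ha fun u _ => mul_nonneg (KK_nonneg L Q i₀) dist_nonneg
  rw [dist_pi_le_iff h0]
  intro j
  rw [Phi_apply, Phi_apply, Real.dist_eq, add_sub_add_left_eq_sub]
  have hint1 := rhs_intInt L Q π i₀ hQL hπmeas hπpos hπsum m.continuous j 0 (τc T t)
  have hint2 := rhs_intInt L Q π i₀ hQL hπmeas hπpos hπsum m'.continuous j 0 (τc T t)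
  rw [← intervalIntegral.integral_sub hint1 hint2]
  refine le_trans (intervalIntegral.abs_integral_le_integral_abs ha) ?_
  refine intervalIntegral.integral_mono_on ha (hint1.sub hint2).abs
    ((continuous_const.mul (m.continuous.dist m'.continuous)).intervalIntegrable _ _) ?_
  intro u _
  exact rhs_lip L Q π i₀ hQL hπpos hπsum u (m u) (m' u) j

lemma iterEst {T : ℝ} (hT : 0 ≤ T) (m m' : ℝ →ᵇ (E → ℝ)) :
    ∀ (N : ℕ) (t : ℝ),
      dist (((Phi L Q π i₀ hQL hπmeas hπpos hπsum m₀ T)^[N] m) t)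
          (((Phi L Q π i₀ hQL hπmeas hπpos hπsum m₀ T)^[N] m') t)
        ≤ dist m m' * (KK L Q i₀ * τc T t) ^ N / (Nat.factorial N : ℝ) := by
  intro N
  induction N with
  | zero =>
    intro t
    simpa using dist_coe_le_dist (f := m) (g := m') t
  | succ N ih =>
    intro t
    rw [Function.iterate_succ_apply', Function.iterate_succ_apply']
    refine le_trans (Phi_dist L Q π i₀ hQL hπmeas hπpos hπsum m₀ T _ _ t) ?_
    have hτT := τc_le hT t
    have hτ0 := τc_nonneg T t
    have step1 : (∫ u in (0:ℝ)..(τc T t),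
          KK L Q i₀ * dist (((Phi L Q π i₀ hQL hπmeas hπpos hπsum m₀ T)^[N] m) u)
            (((Phi L Q π i₀ hQL hπmeas hπpos hπsum m₀ T)^[N] m') u))
        ≤ ∫ u in (0:ℝ)..(τc T t),
            KK L Q i₀ * (dist m m' * (KK L Q i₀ * u) ^ N / (Nat.factorial N : ℝ)) := by
      refine intervalIntegral.integral_mono_on hτ0 ?_ ?_ ?_
      · exact (continuous_const.mul
          (((Phi L Q π i₀ hQL hπmeas hπpos hπsum m₀ T)^[N] m).continuous.dist
            ((Phi L Q π i₀ hQL hπmeas hπpos hπsum m₀ T)^[N] m').continuous)).intervalIntegrable _ _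
      · apply Continuous.intervalIntegrable
        fun_prop
      · intro u hu
        have h1 := ih u
        rw [τc_eq_self hu.1 (le_trans hu.2 hτT)] at h1
        exact mul_le_mul_of_nonneg_left h1 (KK_nonneg L Q i₀)
    refine le_trans step1 (le_of_eq ?_)
    have hrw : (fun u => KK L Q i₀ * (dist m m' * (KK L Q i₀ * u) ^ N / (Nat.factorial N : ℝ)))
        = fun u => (KK L Q i₀ ^ (N+1) * dist m m' / (Nat.factorial N : ℝ)) * u ^ N := by
      funext u
      rw [mul_pow]
      ring
    rw [hrw, intervalIntegral.integral_const_mul, integral_pow]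
    have hNf : (0:ℝ) < (Nat.factorial N : ℝ) := Nat.cast_pos.mpr (Nat.factorial_pos N)
    rw [zero_pow (Nat.succ_ne_zero N), sub_zero, mul_pow, Nat.factorial_succ]
    push_cast
    field_simp

lemma exists_fixed {T : ℝ} (hT : 0 ≤ T) :
    ∃ x : ℝ →ᵇ (E → ℝ),
      Function.IsFixedPt (Phi L Q π i₀ hQL hπmeas hπpos hπsum m₀ T) x ∧
      ∀ y, Function.IsFixedPt (Phi L Q π i₀ hQL hπmeas hπpos hπsum m₀ T) y → y = x := by
  obtain ⟨N, hN⟩ : ∃ N : ℕ, (KK L Q i₀ * T) ^ N / (Nat.factorial N : ℝ) < 1 := by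
    have h := FloorSemiring.tendsto_pow_div_factorial_atTop (K := ℝ) (KK L Q i₀ * T)
    exact (h.eventually_lt_const one_pos).exists
  have hnn : 0 ≤ (KK L Q i₀ * T) ^ N / (Nat.factorial N : ℝ) :=
    div_nonneg (pow_nonneg (mul_nonneg (KK_nonneg L Q i₀) hT) N) (Nat.cast_nonneg _)
  set κ : ℝ≥0 := Real.toNNReal ((KK L Q i₀ * T) ^ N / (Nat.factorial N : ℝ)) with hκdef
  have hκcoe : (κ : ℝ) = (KK L Q i₀ * T) ^ N / (Nat.factorial N : ℝ) := Real.coe_toNNReal _ hnn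
  have hcon : ContractingWith κ ((Phi L Q π i₀ hQL hπmeas hπpos hπsum m₀ T)^[N]) := by
    constructor
    · rw [← NNReal.coe_lt_one, hκcoe]
      exact hN
    · refine LipschitzWith.of_dist_le_mul fun a b => ?_
      rw [hκcoe]
      have hnn2 : 0 ≤ (KK L Q i₀ * T) ^ N / (Nat.factorial N : ℝ) * dist a b := mul_nonneg hnn dist_nonneg
      rw [BoundedContinuousFunction.dist_le hnn2]
      intro t
      refine le_trans (iterEst L Q π i₀ hQL hπmeas hπpos hπsum m₀ hT a b N t) ?_
      have hpow : (KK L Q i₀ * τc T t) ^ N ≤ (KK L Q i₀ * T) ^ N := by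
        refine pow_le_pow_left₀ (mul_nonneg (KK_nonneg L Q i₀) (τc_nonneg T t)) ?_ N
        exact mul_le_mul_of_nonneg_left (τc_le hT t) (KK_nonneg L Q i₀)
      have hNf : (0:ℝ) < (Nat.factorial N : ℝ) := Nat.cast_pos.mpr (Nat.factorial_pos N)
      calc dist a b * (KK L Q i₀ * τc T t) ^ N / (Nat.factorial N : ℝ)
          ≤ dist a b * (KK L Q i₀ * T) ^ N / (Nat.factorial N : ℝ) := by
            gcongr
        _ = (KK L Q i₀ * T) ^ N / (Nat.factorial N : ℝ) * dist a b := by ring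
  set Φ := Phi L Q π i₀ hQL hπmeas hπpos hπsum m₀ T with hΦ
  have hx : Function.IsFixedPt (Φ^[N]) (ContractingWith.fixedPoint (Φ^[N]) hcon) :=
    hcon.fixedPoint_isFixedPt
  set x := ContractingWith.fixedPoint (Φ^[N]) hcon with hxdef
  have hΦx : Function.IsFixedPt (Φ^[N]) (Φ x) := by
    show Φ^[N] (Φ x) = Φ x
    rw [← Function.iterate_succ_apply, Function.iterate_succ_apply']
    rw [hx]
  have hfix : Φ x = x := hcon.fixedPoint_unique hΦx
  exact ⟨x, hfix, fun y hy => hcon.fixedPoint_unique (hy.iterate N)⟩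

include hQL hπmeas hπpos hπsum in
lemma keyT
    (hQrow : ∀ m : E → ℝ, (∀ i, 0 ≤ m i) → (∑ i, m i) = 1 → ∀ i a, (∑ j, Q m i j a) = 0)
    (hQoff : ∀ m : E → ℝ, (∀ i, 0 ≤ m i) → (∑ i, m i) = 1 → ∀ i j a, i ≠ j → 0 ≤ Q m i j a)
    (hm₀pos : ∀ j, 0 ≤ m₀ j) (hm₀sum : (∑ j, m₀ j) = 1)
    {T : ℝ} (hT : 0 ≤ T) :
    ∃ x : ℝ →ᵇ (E → ℝ),
      (∀ t ∈ Icc (0:ℝ) T, (∀ j, 0 ≤ x t j) ∧ (∑ j, x t j) = 1) ∧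
      (∀ t ∈ Icc (0:ℝ) T, ∀ j, x t j = m₀ j + ∫ u in (0:ℝ)..t, rhs Q π i₀ u (x u) j) ∧
      (∀ y : ℝ → E → ℝ, (∀ j, ContinuousOn (fun t => y t j) (Ici (0:ℝ))) →
        (∀ t ∈ Icc (0:ℝ) T, (∀ j, 0 ≤ y t j) ∧ (∑ j, y t j) = 1) →
        (∀ t ∈ Icc (0:ℝ) T, ∀ j, y t j = m₀ j + ∫ u in (0:ℝ)..t, rhs Q π i₀ u (y u) j) →
        ∀ t ∈ Icc (0:ℝ) T, y t = x t) := by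
  obtain ⟨x, hfix, huniq⟩ := exists_fixed L Q π i₀ hQL hπmeas hπpos hπsum m₀ hT
  have hEq : ∀ t ∈ Icc (0:ℝ) T, ∀ j, x t j = m₀ j + ∫ u in (0:ℝ)..t, rhs Q π i₀ u (x u) j := by
    intro t ht j
    conv_lhs => rw [← hfix]
    rw [Phi_apply, τc_eq_self ht.1 ht.2]
  have hsum : ∀ t ∈ Icc (0:ℝ) T, (∑ j, x t j) = 1 := by
    intro t ht
    have h1 : ∑ j, x t j = ∑ j, (m₀ j + ∫ u in (0:ℝ)..t, rhs Q π i₀ u (x u) j) :=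
      Finset.sum_congr rfl fun j _ => hEq t ht j
    rw [h1, Finset.sum_add_distrib, hm₀sum,
      ← intervalIntegral.integral_finset_sum (fun j _ =>
        rhs_intInt L Q π i₀ hQL hπmeas hπpos hπsum x.continuous j 0 t)]
    have hzero : ∀ u : ℝ, (∑ j, rhs Q π i₀ u (x u) j) = 0 := fun u =>
      rhs_sum Q π i₀ hQrow u (x u)
    simp only [hzero, intervalIntegral.integral_zero, add_zero]
  have hpos : ∀ t ∈ Icc (0:ℝ) T, ∀ j, 0 ≤ x t j := by
    intro t ht j
    by_contra hneg
    push_neg at hneg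
    have hgc : Continuous fun s : ℝ => x s j := (continuous_apply j).comp x.continuous
    have hg0 : x 0 j = m₀ j := by
      rw [hEq 0 ⟨le_rfl, hT⟩ j, intervalIntegral.integral_same, add_zero]
    set S : Set ℝ := Icc (0:ℝ) t ∩ {u : ℝ | 0 ≤ x u j} with hSdef
    have hSne : S.Nonempty := ⟨0, ⟨le_rfl, ht.1⟩, by rw [Set.mem_setOf_eq, hg0]; exact hm₀pos j⟩
    have hSbdd : BddAbove S := BddAbove.mono Set.inter_subset_left bddAbove_Icc
    have hSclosed : IsClosed S := isClosed_Icc.inter (isClosed_Ici.preimage hgc)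
    set s := sSup S with hsdef
    have hsS : s ∈ S := hSclosed.csSup_mem hSne hSbdd
    have hs0 : 0 ≤ s := hsS.1.1
    have hsle : s ≤ t := hsS.1.2
    have hgs : 0 ≤ x s j := hsS.2
    have hslt : s < t :=
      lt_of_le_of_ne hsle (fun h => absurd (h ▸ hgs) (not_le.mpr hneg))
    have hub : ∀ u ∈ S, u ≤ s := fun u hu => le_csSup hSbdd hu
    have hgneg : ∀ u ∈ Ioc s t, x u j < 0 := by
      intro u hu
      by_contra h
      push_neg at h
      have huS : u ∈ S := ⟨⟨le_trans hs0 hu.1.le, hu.2⟩, h⟩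
      exact absurd (hub u huS) (not_le.mpr hu.1)
    have hgs0 : x s j = 0 := by
      rcases eq_or_lt_of_le hgs with h | h
      · exact h.symm
      · exfalso
        have hev : ∀ᶠ u in nhds s, 0 < x u j := (hgc.tendsto s).eventually (lt_mem_nhds h)
        have hev2 : ∀ᶠ u in nhdsWithin s (Ioi s), 0 < x u j := hev.filter_mono nhdsWithin_le_nhds
        have hIoc : Ioc s t ∈ nhdsWithin s (Ioi s) := Ioc_mem_nhdsGT_of_mem ⟨le_rfl, hslt⟩
        obtain ⟨u, hu1, hu2⟩ :=
          (hev2.and (Filter.eventually_of_mem hIoc fun u hu => hu)).exists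
        exact absurd hu1 (not_lt.mpr (hgneg u hu2).le)
    have hint0s := rhs_intInt L Q π i₀ hQL hπmeas hπpos hπsum x.continuous j 0 s
    have hintst := rhs_intInt L Q π i₀ hQL hπmeas hπpos hπsum x.continuous j s t
    have hadd : (∫ u in (0:ℝ)..s, rhs Q π i₀ u (x u) j)
          + ∫ u in s..t, rhs Q π i₀ u (x u) j
        = ∫ u in (0:ℝ)..t, rhs Q π i₀ u (x u) j :=
      intervalIntegral.integral_add_adjacent_intervals hint0s hintst
    have hgt : x t j = x s j + ∫ u in s..t, rhs Q π i₀ u (x u) j := by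
      have h1 := hEq t ht j
      have h2 := hEq s ⟨hs0, le_trans hsle ht.2⟩ j
      rw [h1, h2, ← hadd]
      ring
    have hintpos : 0 ≤ ∫ u in s..t, rhs Q π i₀ u (x u) j := by
      refine intervalIntegral.integral_nonneg hslt.le fun u hu => ?_
      refine rhs_nonneg_of_nonpos Q π i₀ hQoff hπpos u (x u) ?_
      rcases eq_or_lt_of_le hu.1 with h | h
      · rw [← h]
        exact hgs0.le
      · exact (hgneg u ⟨h, hu.2⟩).le
    rw [hgs0, zero_add] at hgt
    exact absurd (hgt ▸ hintpos) (not_le.mpr hneg)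
  refine ⟨x, fun t ht => ⟨hpos t ht, hsum t ht⟩, hEq, ?_⟩
  intro y hyC hyS hyEq t ht
  have hcont : Continuous fun u => y (τc T u) := by
    refine continuous_pi fun j => ?_
    exact (hyC j).comp_continuous (continuous_τc T) fun u => τc_nonneg T u
  set ytil : ℝ →ᵇ (E → ℝ) := BoundedContinuousFunction.mkOfBound
    ⟨fun u => y (τc T u), hcont⟩ 2 (by
      intro u v
      rw [dist_pi_le_iff (by norm_num : (0:ℝ) ≤ 2)]
      intro j
      have h1 := hyS (τc T u) ⟨τc_nonneg T u, τc_le hT u⟩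
      have h2 := hyS (τc T v) ⟨τc_nonneg T v, τc_le hT v⟩
      have b1 : y (τc T u) j ≤ 1 := coord_le_one h1.1 h1.2 j
      have b2 : y (τc T v) j ≤ 1 := coord_le_one h2.1 h2.2 j
      rw [Real.dist_eq]
      simp only [ContinuousMap.coe_mk]
      rw [abs_sub_le_iff]
      constructor <;> linarith [h1.1 j, h2.1 j]) with hytil
  have hyval : ∀ u : ℝ, ytil u = y (τc T u) := fun u => rfl
  have hyfix : Function.IsFixedPt (Phi L Q π i₀ hQL hπmeas hπpos hπsum m₀ T) ytil := by
    apply BoundedContinuousFunction.ext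
    intro u
    funext j
    rw [Phi_apply]
    have hcongr : Set.EqOn (fun w => rhs Q π i₀ w (ytil w) j)
        (fun w => rhs Q π i₀ w (y w) j) (Set.uIcc 0 (τc T u)) := by
      intro w hw
      rw [Set.uIcc_of_le (τc_nonneg T u)] at hw
      simp only
      rw [hyval w, τc_eq_self hw.1 (le_trans hw.2 (τc_le hT u))]
    rw [intervalIntegral.integral_congr hcongr, hyval u,
      ← hyEq (τc T u) ⟨τc_nonneg T u, τc_le hT u⟩ j]
  have hyx : ytil = x := huniq ytil hyfix
  have : y t = ytil t := by
    rw [hyval t, τc_eq_self ht.1 ht.2]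
  rw [this, hyx]

end Picard
end KolmogorovAux

open KolmogorovAux

/-- Under assumption (A1), the Kolmogorov integral equation has a unique continuous
solution on `ℝ≥0` with values in the probability simplex (uniqueness meaning any two
solutions agree for all `t ≥ 0`). -/
theorem kolmogorov_ode_exists_unique
    {E A : Type*} [Fintype E] [Fintype A]
    (L : ℝ≥0) (Q : (E → ℝ) → E → E → A → ℝ)
    (hQL : ∀ i j a, LipschitzWith L (fun m => Q m i j a))
    (hQrow : ∀ m : E → ℝ, (∀ i, 0 ≤ m i) → (∑ i, m i) = 1 →
      ∀ i a, (∑ j, Q m i j a) = 0)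
    (hQoff : ∀ m : E → ℝ, (∀ i, 0 ≤ m i) → (∑ i, m i) = 1 →
      ∀ i j a, i ≠ j → 0 ≤ Q m i j a)
    (π : ℝ → E → A → ℝ) (hπmeas : ∀ i a, Measurable (fun t => π t i a))
    (hπpos : ∀ t i a, 0 ≤ π t i a) (hπsum : ∀ t i, (∑ a, π t i a) = 1) 
    (m₀ : E → ℝ) (hm₀pos : ∀ j, 0 ≤ m₀ j) (hm₀sum : (∑ j, m₀ j) = 1) :
    (∃ m : ℝ → E → ℝ,
      (∀ j, ContinuousOn (fun t => m t j) (Set.Ici (0:ℝ))) ∧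
      (∀ t ≥ (0:ℝ), (∀ j, 0 ≤ m t j) ∧ (∑ j, m t j) = 1) ∧
      (∀ t ≥ (0:ℝ), ∀ j,
        m t j = m₀ j + ∫ u in (0:ℝ)..t, ∑ i, ∑ a, m u i * Q (m u) i j a * π u i a)) ∧
    (∀ m m' : ℝ → E → ℝ,
      (∀ j, ContinuousOn (fun t => m t j) (Set.Ici (0:ℝ))) →
      (∀ t ≥ (0:ℝ), (∀ j, 0 ≤ m t j) ∧ (∑ j, m t j) = 1) →
      (∀ t ≥ (0:ℝ), ∀ j,
        m t j = m₀ j + ∫ u in (0:ℝ)..t, ∑ i, ∑ a, m u i * Q (m u) i j a * π u i a) →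
      (∀ j, ContinuousOn (fun t => m' t j) (Set.Ici (0:ℝ))) →
      (∀ t ≥ (0:ℝ), (∀ j, 0 ≤ m' t j) ∧ (∑ j, m' t j) = 1) →
      (∀ t ≥ (0:ℝ), ∀ j,
        m' t j = m₀ j + ∫ u in (0:ℝ)..t, ∑ i, ∑ a, m' u i * Q (m' u) i j a * π u i a) →
      ∀ t ≥ (0:ℝ), m t = m' t) := by
  classical
  have hEne : Nonempty E := by
    by_contra h
    rw [not_nonempty_iff] at h
    rw [Finset.univ_eq_empty, Finset.sum_empty] at hm₀sum
    exact one_ne_zero hm₀sum.symm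
  obtain ⟨i₀⟩ := hEne
  have key := fun (n : ℕ) =>
    keyT L Q π i₀ hQL hπmeas hπpos hπsum m₀ hQrow hQoff hm₀pos hm₀sum
      (T := (n : ℝ)) (Nat.cast_nonneg n)
  choose X hX1 hX2 hX3 using key
  have hfl : ∀ t : ℝ, t ≤ ((Nat.floor t + 1 : ℕ) : ℝ) := fun t => by
    push_cast
    rcases le_or_gt 0 t with h | h
    · exact (Nat.lt_floor_add_one t).le
    · have : (0:ℝ) ≤ (Nat.floor t : ℝ) := Nat.cast_nonneg _
      linarith
  have convert : ∀ (y : ℝ → E → ℝ),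
      (∀ t ≥ (0:ℝ), (∀ j, 0 ≤ y t j) ∧ (∑ j, y t j) = 1) →
      (∀ t ≥ (0:ℝ), ∀ j,
        y t j = m₀ j + ∫ u in (0:ℝ)..t, ∑ i, ∑ a, y u i * Q (y u) i j a * π u i a) →
      ∀ t ≥ (0:ℝ), ∀ j, y t j = m₀ j + ∫ u in (0:ℝ)..t, rhs Q π i₀ u (y u) j := by
    intro y hS hEq t ht j
    rw [hEq t ht j]
    congr 1
    refine (intervalIntegral.integral_congr ?_).symm
    intro u hu
    rw [Set.uIcc_of_le ht] at hu
    have h := hS u hu.1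
    simp only
    exact rhs_eq_orig Q π i₀ h.1 h.2 u j
  have compat : ∀ (n k : ℕ), n ≤ k → ∀ t ∈ Set.Icc (0:ℝ) (n:ℝ), X k t = X n t := by
    intro n k hnk t htn
    refine hX3 n (fun s => X k s) (fun j =>
      ((continuous_apply j).comp (X k).continuous).continuousOn) ?_ ?_ t htn
    · intro s hs
      exact hX1 k s ⟨hs.1, le_trans hs.2 (Nat.cast_le.mpr hnk)⟩
    · intro s hs j
      exact hX2 k s ⟨hs.1, le_trans hs.2 (Nat.cast_le.mpr hnk)⟩ j
  set M : ℝ → E → ℝ := fun t => X (Nat.floor t + 1) t with hM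
  have hMeq : ∀ (n : ℕ) (t : ℝ), t ∈ Set.Icc (0:ℝ) (n:ℝ) → M t = X n t := by
    intro n t ht
    have h1 : t ∈ Set.Icc (0:ℝ) ((Nat.floor t + 1 : ℕ) : ℝ) := ⟨ht.1, hfl t⟩
    have e1 : X (max n (Nat.floor t + 1)) t = X (Nat.floor t + 1) t :=
      compat _ _ (le_max_right _ _) t h1
    have e2 : X (max n (Nat.floor t + 1)) t = X n t :=
      compat n _ (le_max_left _ _) t ht
    rw [hM]
    simp only
    rw [← e1, e2]
  constructor
  · refine ⟨M, ?_, ?_, ?_⟩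
    · -- continuity
      intro j t₀ ht₀
      set n := Nat.floor t₀ + 1 with hn
      have hlt : t₀ < (n:ℝ) := by
        rw [hn]; push_cast
        rcases le_or_gt 0 t₀ with h | h
        · exact Nat.lt_floor_add_one t₀
        · have : (0:ℝ) ≤ (Nat.floor t₀ : ℝ) := Nat.cast_nonneg _
          linarith
      have hbase : ContinuousWithinAt (fun u => X n u j) (Set.Ici 0) t₀ :=
        ((continuous_apply j).comp (X n).continuous).continuousWithinAt
      have hev : (fun u => M u j) =ᶠ[nhdsWithin t₀ (Set.Ici 0)] (fun u => X n u j) := by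
        filter_upwards [Filter.inter_mem
          (mem_nhdsWithin_of_mem_nhds (Iio_mem_nhds hlt)) self_mem_nhdsWithin]
          with u hu
        exact congrFun (hMeq n u ⟨hu.2, (hu.1 : u < (n:ℝ)).le⟩) j
      exact hbase.congr_of_eventuallyEq hev (congrFun (hMeq n t₀ ⟨ht₀, hlt.le⟩) j)
    · -- simplex
      intro t ht
      have h1 : t ∈ Set.Icc (0:ℝ) ((Nat.floor t + 1 : ℕ) : ℝ) := ⟨ht, hfl t⟩
      have := hX1 (Nat.floor t + 1) t h1
      rw [hMeq (Nat.floor t + 1) t h1]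
      exact this
    · -- equation
      intro t ht j
      have htn : t ∈ Set.Icc (0:ℝ) ((Nat.floor t + 1 : ℕ) : ℝ) := ⟨ht, hfl t⟩
      set n := Nat.floor t + 1 with hn
      have h2 := hX2 n t htn j
      have hMt : M t j = X n t j := congrFun (hMeq n t htn) j
      rw [hMt, h2]
      congr 1
      refine intervalIntegral.integral_congr ?_
      intro u hu
      rw [Set.uIcc_of_le ht] at hu
      have hun : u ∈ Set.Icc (0:ℝ) (n:ℝ) := ⟨hu.1, le_trans hu.2 htn.2⟩
      have hsimp := hX1 n u hun
      simp only
      rw [rhs_eq_orig Q π i₀ hsimp.1 hsimp.2 u j]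
      refine Finset.sum_congr rfl fun i _ => Finset.sum_congr rfl fun a _ => ?_
      rw [hMeq n u hun]
  · -- uniqueness
    intro m m' hC hS hEqm hC' hS' hEqm' t ht
    have htn : t ∈ Set.Icc (0:ℝ) ((Nat.floor t + 1 : ℕ) : ℝ) := ⟨ht, hfl t⟩
    set n := Nat.floor t + 1 with hn
    have h1 : m t = X n t := by
      refine hX3 n m hC ?_ ?_ t htn
      · exact fun s hs => hS s hs.1
      · exact fun s hs j => convert m hS hEqm s hs.1 j
    have h2 : m' t = X n t := by
      refine hX3 n m' hC' ?_ ?_ t htn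
      · exact fun s hs => hS' s hs.1
      · exact fun s hs j => convert m' hS' hEqm' s hs.1 j
    rw [h1, h2]
end
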